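/- arXiv:2003.07817 — 8 statements merged into one kernel-verified Lean document; each statement's English description precedes it below -/
import Mathlib

section
/- Let X ⊆ Z^d be a finite lattice-convex set with dim(X) ≥ 4. Then rc(X) > log₂(dim(X)) − log₂ log₂(dim(X)). -/
/-- Coercion of an integer point to a real point. -/
def ZtoR {d : ℕ} (x : Fin d → ℤ) : Fin d → ℝ := fun i => (x i : ℝ)

/-- `X ⊆ ℤ^d` is lattice-convex if `conv(X) ∩ ℤ^d = X`. -/
def IsLatticeConvex {d : ℕ} (X : Set (Fin d → ℤ)) : Prop :=
  ∀ z : Fin d → ℤ, ZtoR z ∈ convexHull ℝ (ZtoR '' X) → z ∈ X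

/-- `X` is described within `ℤ^d` by a system of `k` real linear inequalities
(together with finitely many linear equations). -/
def IsRelaxation {d : ℕ} (X : Set (Fin d → ℤ)) (k : ℕ) : Prop :=
  ∃ (m : ℕ) (A : Fin k → Fin d → ℝ) (b : Fin k → ℝ) (U : Fin m → Fin d → ℝ) (v : Fin m → ℝ),
    X = {x : Fin d → ℤ |
      (∀ i, ∑ j, A i j * (x j : ℝ) ≤ b i) ∧ ∀ i, ∑ j, U i j * (x j : ℝ) = v i}

/-- The relaxation complexity of `X` within `ℤ^d`. -/
noncomputable def rc {d : ℕ} (X : Set (Fin d → ℤ)) : ℕ := sInf {k | IsRelaxation X k}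

/-- `X` is described within `ℤ^d` by a system of `k` rational linear inequalities
(together with finitely many rational linear equations). -/
def IsRelaxationQ {d : ℕ} (X : Set (Fin d → ℤ)) (k : ℕ) : Prop :=
  ∃ (m : ℕ) (A : Fin k → Fin d → ℚ) (b : Fin k → ℚ) (U : Fin m → Fin d → ℚ) (v : Fin m → ℚ),
    X = {x : Fin d → ℤ |
      (∀ i, ∑ j, A i j * (x j : ℚ) ≤ b i) ∧ ∀ i, ∑ j, U i j * (x j : ℚ) = v i}

/-- The rational relaxation complexity of `X` within `ℤ^d`. -/
noncomputable def rcQ {d : ℕ} (X : Set (Fin d → ℤ)) : ℕ := sInf {k | IsRelaxationQ X k}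

/-- The dimension of `X`, i.e. the dimension of its affine hull. -/
noncomputable def dimX {d : ℕ} (X : Set (Fin d → ℤ)) : ℕ :=
  Module.finrank ℝ (affineSpan ℝ (ZtoR '' X)).direction

/-!
A finite lattice-convex set `X` is cut out by a bounding box together with one hyperplane
separating each lattice point of the box outside `X` from `conv X`, so `rc X` is attained.

Fix a description of `X` by `k` inequalities and `n + 1` affinely independent points of `X`,
`n = dim X`. Suppose `r + 1` of these points `x, x₁, …, x_r` are tight (satisfied with equality)
for every inequality tight at `x`. The inequalities tight at `x` vanish on the lattice spanned by
the `xᵢ - x`, which has rank `r`, and the other inequalities are slack at `x`. If `r` exceeds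
the number of slack inequalities, the lattice contains infinitely many points on which all the
slack inequalities are arbitrarily small (rounding multiples of a real kernel vector), and
translating them by `x` gives infinitely many points of `X`. Counting points by their sets of
tight inequalities then gives `n ≤ k * 2 ^ k`, which unwinds to
`log₂ n - log₂ log₂ n < k`.
-/

open Finset Filter Matrix

theorem infinite_setOf_forall_abs_mulVec_lt {ι κ : Type*} [Fintype ι] [Fintype κ]
    (β : Matrix ι κ ℝ) (hcard : Fintype.card ι < Fintype.card κ) {ε : ℝ} (hε : 0 < ε) :
    {μ : κ → ℤ | ∀ i, |(β *ᵥ fun j => (μ j : ℝ)) i| < ε}.Infinite := by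
  obtain ⟨w, hw, hw0⟩ : ∃ w ∈ LinearMap.ker β.mulVecLin, w ≠ 0 :=
    (Submodule.ne_bot_iff _).1 (LinearMap.ker_ne_bot_of_finrank_lt (by simpa using hcard))
  obtain ⟨j₀, hj₀ : w j₀ ≠ 0⟩ := Function.ne_iff.1 hw0
  -- Rounding `s • w'` gives integer vectors with `j₀`-th entry `s`, whose images under `β`
  -- stay in a compact set; differences along a convergent subsequence are the points we want.
  set w' := (w j₀)⁻¹ • w
  have hw' : β *ᵥ w' = 0 := by
    rw [Matrix.mulVec_smul, show β *ᵥ w = 0 from hw, smul_zero]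
  let f : ℕ → κ → ℤ := fun s j => round ((s : ℝ) * w' j)
  have hf : Function.Injective f := fun s s' h => by
    simpa [f, w', hj₀] using congrFun h j₀
  have hβf : ∀ s : ℕ,
      β *ᵥ (fun j => (f s j : ℝ)) = β *ᵥ ((fun j => (f s j : ℝ)) - (s : ℝ) • w') := by
    intro s
    rw [Matrix.mulVec_sub, Matrix.mulVec_smul, hw', smul_zero, sub_zero]
  set K : Set (κ → ℝ) := Set.univ.pi fun _ => Set.Icc (-(1/2)) (1/2)
  have hK : IsCompact ((β *ᵥ ·) '' K) :=
    (isCompact_univ_pi fun _ => isCompact_Icc).image (by fun_prop)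
  have hround : ∀ s : ℕ, (fun j => (f s j : ℝ)) - (s : ℝ) • w' ∈ K := fun s =>
    Set.mem_univ_pi.2 fun j => abs_le.1 (by simpa [abs_sub_comm] using abs_sub_round (s * w' j))
  obtain ⟨a, -, φ, hφ, hlim⟩ :=
    hK.tendsto_subseq (x := fun s => β *ᵥ fun j => (f s j : ℝ))
    fun s => ⟨_, hround s, (hβf s).symm⟩
  obtain ⟨N, hN⟩ := Metric.cauchySeq_iff'.1 hlim.cauchySeq ε hε
  refine Set.infinite_of_injective_forall_mem (f := fun m => f (φ (m + N)) - f (φ N)) ?_ ?_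
  · intro m m' h
    have := hφ.injective (hf (sub_left_injective h))
    omega
  · intro m i
    have h := (dist_le_pi_dist _ _ i).trans_lt (hN (m + N) (by omega))
    rw [Function.comp_apply, Function.comp_apply, Real.dist_eq, ← Pi.sub_apply,
      ← Matrix.mulVec_sub] at h
    simp only [Pi.sub_apply, Int.cast_sub]
    exact h

theorem AffineIndependent.of_comp_addMonoidHom {G V τ : Type*} [AddCommGroup G]
    [AddCommGroup V] [Module ℝ V] (f : G →+ V) {p : τ → G}
    (h : AffineIndependent ℝ (f ∘ p)) : AffineIndependent ℤ p := by
  rcases isEmpty_or_nonempty τ with hτ | ⟨⟨t₀⟩⟩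
  · exact affineIndependent_of_subsingleton ℤ p
  rw [affineIndependent_iff_linearIndependent_vsub ℝ _ t₀] at h
  rw [affineIndependent_iff_linearIndependent_vsub ℤ _ t₀]
  exact .of_comp f.toIntLinearMap
    (by simpa [Function.comp_def, map_sub] using h.restrict_scalars' ℤ)

section SolutionSet

variable {G : Type*} [AddCommGroup G] {ι κ : Type*} [Fintype ι]
  (ℓ : ι → G →+ ℝ) (c : ι → ℝ) (u : κ → G →+ ℝ) (v : κ → ℝ)

def solutionSet : Set G := {y | (∀ i, ℓ i y ≤ c i) ∧ ∀ j, u j y = v j}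

variable {ℓ c u v}

theorem solutionSet_infinite_of_card_slack_lt {x : G} (hx : x ∈ solutionSet ℓ c u v)
    {τ : Type*} [Fintype τ] {η : τ → G} (hη : LinearIndependent ℤ η)
    (hu : ∀ j t, u j (η t) = 0)
    (htight : ∀ i, ℓ i x = c i → ∀ t, ℓ i (η t) = 0)
    (hcard : Fintype.card {i // ℓ i x < c i} < Fintype.card τ) :
    (solutionSet ℓ c u v).Infinite := by
  obtain ⟨ε, hε, hεslack⟩ : ∃ ε > 0, ∀ i : {i // ℓ i x < c i}, ε ≤ c i - ℓ i x :=
    ((eventually_mem_nhdsWithin (s := Set.Ioi 0)).and <| eventually_all.2 fun i =>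
      (eventually_le_nhds (sub_pos.2 i.2)).filter_mono nhdsWithin_le_nhds).exists
  let F : (τ → ℤ) → G := fun μ => x + ∑ t, μ t • η t
  have hF : Function.Injective F :=
    (add_right_injective x).comp hη.fintypeLinearCombination_injective
  have hmap : ∀ f : G →+ ℝ, ∀ μ, f (F μ) = f x + ∑ t, f (η t) * μ t := fun f μ => by
    simp [F, map_sum, mul_comm]
  refine ((infinite_setOf_forall_abs_mulVec_lt (fun (i : {i // ℓ i x < c i}) t => ℓ i (η t))
    hcard hε).image hF.injOn).mono ?_
  rintro _ ⟨μ, hμ, rfl⟩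
  refine ⟨fun i => ?_, fun j => by simp [hmap, hu, hx.2 j]⟩
  rw [hmap]
  by_cases hi : ℓ i x = c i
  · simp [htight i hi, hi]
  · have hslack : ℓ i x < c i := lt_of_le_of_ne (hx.1 i) hi
    have hsmall : ∑ t, ℓ i (η t) * μ t < ε := (abs_lt.1 (hμ ⟨i, hslack⟩)).2
    linarith [hεslack ⟨i, hslack⟩]

theorem card_add_card_tight_le {τ : Type*} {p : τ → G} (hp : AffineIndependent ℤ p)
    (hpS : ∀ s, p s ∈ solutionSet ℓ c u v) (hfin : (solutionSet ℓ c u v).Finite)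
    {t₀ : τ} {F : Finset τ} (ht₀ : t₀ ∉ F)
    (hF : ∀ s ∈ F, ∀ i, ℓ i (p t₀) = c i → ℓ i (p s) = c i) :
    #F + #{i | ℓ i (p t₀) = c i} ≤ Fintype.card ι := by
  classical
  have hsplit : #{i | ℓ i (p t₀) < c i} + #{i | ℓ i (p t₀) = c i} = Fintype.card ι := by
    rw [← card_union_of_disjoint (disjoint_filter.2 fun i _ h h' => h.ne h'), ← filter_or,
      filter_true_of_mem fun i _ => ((hpS t₀).1 i).lt_or_eq, card_univ]
  by_contra! h
  refine solutionSet_infinite_of_card_slack_lt (hpS t₀) (η := fun s : F => p s - p t₀)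
    ?_ ?_ ?_ ?_ hfin
  · exact ((affineIndependent_iff_linearIndependent_vsub ℤ p t₀).1 hp).comp
      (fun s : F => ⟨s.1, fun h => ht₀ (h ▸ s.2)⟩)
      fun a b h => Subtype.ext (congrArg Subtype.val h :)
  · intro j s
    simp [(hpS s).2 j, (hpS t₀).2 j]
  · intro i hi s
    simp [hF s s.2 i hi, hi]
  · rw [Fintype.card_subtype, Fintype.card_coe]
    omega

theorem card_le_card_mul_two_pow_add_one {τ : Type*} [Fintype τ] {p : τ → G}
    (hp : AffineIndependent ℤ p) (hpS : ∀ s, p s ∈ solutionSet ℓ c u v)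
    (hfin : (solutionSet ℓ c u v).Finite) :
    Fintype.card τ ≤ Fintype.card ι * 2 ^ Fintype.card ι + 1 := by
  classical
  set k := Fintype.card ι
  let tight : τ → Finset ι := fun t => {i | ℓ i (p t) = c i}
  have hsuper : ∀ t₀, #{t | tight t₀ ⊆ tight t} + #(tight t₀) ≤ k + 1 := by
    intro t₀
    have hmem : t₀ ∈ ({t | tight t₀ ⊆ tight t} : Finset τ) :=
      mem_filter.2 ⟨mem_univ _, subset_rfl⟩
    have : _ + #(tight t₀) ≤ k :=
      card_add_card_tight_le hp hpS hfin (notMem_erase t₀ {t | tight t₀ ⊆ tight t})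
      fun s hs i hi => by
        simpa [tight] using (mem_filter.1 (mem_of_mem_erase hs)).2 (by simpa [tight] using hi)
    rw [card_erase_of_mem hmem] at this
    have := card_pos.2 ⟨t₀, hmem⟩
    omega
  by_cases hempty : ∃ t, tight t = ∅
  · obtain ⟨t, ht⟩ := hempty
    have := hsuper t
    simp only [ht, empty_subset, filter_true, card_univ, card_empty] at this
    nlinarith [Nat.one_le_two_pow (n := k)]
  · push Not at hempty
    calc Fintype.card τ ≤ k * #(univ.image tight) := card_le_mul_card_image _ _ fun π hπ => by
          obtain ⟨t₀, -, rfl⟩ := mem_image.1 hπ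
          have := hsuper t₀
          have := card_le_card
            (monotone_filter_right univ fun t _ (h : tight t = tight t₀) => h.ge)
          have := card_pos.2 (hempty t₀)
          omega
      _ ≤ k * 2 ^ k := Nat.mul_le_mul_left _ ((card_le_univ _).trans Fintype.card_finset.le)
      _ ≤ k * 2 ^ k + 1 := Nat.le_succ _

end SolutionSet

def intDotProduct {κ : Type*} [Fintype κ] (a : κ → ℝ) : (κ → ℤ) →+ ℝ where
  toFun y := ∑ j, a j * y j
  map_zero' := by simp
  map_add' y z := by simp [mul_add, sum_add_distrib]

theorem dimX_le_of_isRelaxation {d k : ℕ} {X : Set (Fin d → ℤ)} (hfin : X.Finite)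
    (hX : IsRelaxation X k) : dimX X ≤ k * 2 ^ k := by
  obtain ⟨t, htX, hspan, hai⟩ := exists_affineIndependent ℝ (Fin d → ℝ) (ZtoR '' X)
  rcases t.eq_empty_or_nonempty with rfl | htne
  · rw [dimX, ← hspan, AffineSubspace.span_empty, AffineSubspace.direction_bot, finrank_bot]
    exact Nat.zero_le _
  have : Fintype t := ((hfin.image ZtoR).subset htX).fintype
  have : Nonempty t := htne.to_subtype
  choose p hpX hp using fun y : t => htX y.2
  have hdim : dimX X + 1 = Fintype.card t := by
    rw [dimX, ← hspan, direction_affineSpan, ← hai.finrank_vectorSpan_add_one,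
      Subtype.range_coe]
  have hpR : AffineIndependent ℝ (ZtoR ∘ p) := by rwa [show ZtoR ∘ p = (↑) from funext hp]
  obtain ⟨m, A, b, U, v, rfl⟩ := hX
  have := card_le_card_mul_two_pow_add_one (ℓ := fun i => intDotProduct (A i)) (c := b)
    (u := fun i => intDotProduct (U i)) (v := v)
    (hpR.of_comp_addMonoidHom ((Int.castAddHom ℝ).compLeft (Fin d))) hpX hfin
  simp only [Fintype.card_fin] at this
  omega

theorem isRelaxation_of_forall_iff {d : ℕ} {X : Set (Fin d → ℤ)} {ι : Type*} [Fintype ι]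
    (f : ι → Module.Dual ℝ (Fin d → ℝ)) (b : ι → ℝ)
    (hX : ∀ x, x ∈ X ↔ ∀ i, f i (ZtoR x) ≤ b i) : IsRelaxation X (Fintype.card ι) := by
  let e := Fintype.equivFin ι
  refine ⟨0, fun i j => f (e.symm i) (fun k => if j = k then 1 else 0), fun i => b (e.symm i),
    0, 0, ?_⟩
  ext x
  simp only [hX, Set.mem_ofPred_eq, IsEmpty.forall_iff, and_true, e.symm.forall_congr_left]
  refine forall_congr' fun i => ?_
  rw [LinearMap.pi_apply_eq_sum_univ]
  simp [ZtoR, mul_comm]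

theorem exists_isRelaxation {d : ℕ} {X : Set (Fin d → ℤ)} (hfin : X.Finite)
    (hlc : IsLatticeConvex X) : ∃ k, IsRelaxation X k := by
  obtain ⟨lo, hlo⟩ := hfin.bddBelow
  obtain ⟨hi, hhi⟩ := hfin.bddAbove
  set W := Set.Icc lo hi \ X
  have : Fintype W := (Set.finite_Icc lo hi).sdiff.fintype
  have hsep : ∀ z : W, ∃ (f : (Fin d → ℝ) →L[ℝ] ℝ) (r : ℝ),
      (∀ y ∈ convexHull ℝ (ZtoR '' X), f y < r) ∧ r < f (ZtoR z) := fun z =>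
    geometric_hahn_banach_closed_point (convex_convexHull ℝ _)
      ((hfin.image ZtoR).isCompact_convexHull (𝕜 := ℝ)).isClosed fun h => z.2.2 (hlc z h)
  choose f r hfX hfz using hsep
  refine ⟨_, isRelaxation_of_forall_iff (ι := Fin d ⊕ Fin d ⊕ W)
    (Sum.elim (fun j => LinearMap.proj j) (Sum.elim (fun j => -LinearMap.proj j)
      fun z => (f z : (Fin d → ℝ) →ₗ[ℝ] ℝ)))
    (Sum.elim (fun j => hi j) (Sum.elim (fun j => -lo j) r)) fun x => ?_⟩
  simp only [Sum.forall, Sum.elim_inl, Sum.elim_inr, LinearMap.neg_apply, LinearMap.coe_proj,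
    Function.eval, ContinuousLinearMap.coe_coe, ZtoR, neg_le_neg_iff, Int.cast_le]
  constructor
  · intro hx
    exact ⟨fun j => hhi hx j, fun j => hlo hx j,
      fun z => (hfX z _ (subset_convexHull ℝ _ (Set.mem_image_of_mem _ hx))).le⟩
  · rintro ⟨hle, hge, hsepx⟩
    by_contra hx
    have hxW : x ∈ W := ⟨⟨hge, hle⟩, hx⟩
    exact (hsepx ⟨x, hxW⟩).not_gt (hfz ⟨x, hxW⟩)

theorem logb_sub_logb_logb_lt {n k : ℕ} (hn : 4 ≤ n) (hnk : n ≤ k * 2 ^ k) :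
    Real.logb 2 n - Real.logb 2 (Real.logb 2 n) < k := by
  have hk : 0 < k := Nat.pos_of_ne_zero fun hk => by simp [hk] at hnk; omega
  set L := Real.logb 2 n
  have hL : 2 ≤ L := by
    rw [Real.le_logb_iff_rpow_le one_lt_two (by positivity)]
    norm_num
    exact_mod_cast hn
  have hlogL : 1 ≤ Real.logb 2 L := by
    rw [Real.le_logb_iff_rpow_le one_lt_two (by positivity), Real.rpow_one]
    exact hL
  have hLk : L ≤ Real.logb 2 k + k := by
    calc L ≤ Real.logb 2 (k * 2 ^ k) :=
          Real.logb_le_logb_of_le one_lt_two (by positivity) (by exact_mod_cast hnk)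
      _ = Real.logb 2 k + k := by
          rw [Real.logb_mul (by positivity) (by positivity), Real.logb_pow,
            Real.logb_self_eq_one one_lt_two, mul_one]
  rcases le_or_gt L k with hLk' | hkL
  · linarith
  · linarith [Real.logb_lt_logb one_lt_two (by positivity) hkL]

/-- For a finite lattice-convex set `X` with `dim(X) ≥ 4`,
`rc(X) > log₂(dim X) − log₂ log₂(dim X)`. -/
theorem rc_gt_log_dim {d : ℕ} (X : Set (Fin d → ℤ)) (hfin : X.Finite)
    (hlc : IsLatticeConvex X) (hdim : 4 ≤ dimX X) :
    (rc X : ℝ) > Real.logb 2 (dimX X) - Real.logb 2 (Real.logb 2 (dimX X)) := by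
  obtain ⟨k, hk⟩ := exists_isRelaxation hfin hlc
  have hrc : IsRelaxation X (rc X) := Nat.sInf_mem (s := {k | IsRelaxation X k}) ⟨k, hk⟩
  exact logb_sub_logb_logb_lt hdim (dimX_le_of_isRelaxation hfin hrc)
end

section
/- Let X ⊆ Z^2 be a finite lattice-convex set with dim(X) ≥ 1. Then every polyhedron P ⊆ R^2 with P ∩ Z^2 = X is bounded. -/
/-- A polyhedron is the solution set of finitely many linear inequalities. -/
def IsPolyhedron {d : ℕ} (P : Set (Fin d → ℝ)) : Prop :=
  ∃ (k : ℕ) (A : Fin k → Fin d → ℝ) (b : Fin k → ℝ),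
    P = {x | ∀ i, ∑ j, A i j * x j ≤ b i}

/-!
If the polyhedron `P` were unbounded, compactness of the unit sphere would give a recession
direction `r ≠ 0` with `P + ℝ≥0 r ⊆ P`. Since `dim X ≥ 1`, `X` contains two lattice points `x ≠ y`,
so `P` contains the half-strip `[x, y] + ℝ≥0 r`. In the plane such a half-strip contains infinitely
many lattice points: if `r` is parallel to `w = y - x` they lie on the ray `x + ℕ w` or `x - ℕ w`;
otherwise, for a lattice vector `u` independent of `w`, each line `x + k u + ℝ w` that meets the
half-strip meets it in a translate of `[0, w]`, which contains a point of `x + k u + ℤ w`. All of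
them lie in `P ∩ ℤ² = X`, contradicting the finiteness of `X`.
-/

open Filter Topology Bornology Pointwise

section Lattice

variable {d : ℕ}

@[simp]
theorem ZtoR_apply (x : Fin d → ℤ) (i : Fin d) : ZtoR x i = x i := rfl

@[simp]
theorem ZtoR_add (x y : Fin d → ℤ) : ZtoR (x + y) = ZtoR x + ZtoR y := by
  ext; simp

@[simp]
theorem ZtoR_zsmul (k : ℤ) (x : Fin d → ℤ) : ZtoR (k • x) = (k : ℝ) • ZtoR x := by
  ext; simp

theorem nontrivial_of_one_le_dimX {X : Set (Fin d → ℤ)} (hdim : 1 ≤ dimX X) : X.Nontrivial := by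
  by_contra hX
  have hsub : (ZtoR '' X).Subsingleton := (Set.not_nontrivial_iff.mp hX).image _
  have : dimX X = 0 := by
    rw [dimX, direction_affineSpan, vectorSpan_of_subsingleton ℝ hsub, finrank_bot]
  omega

end Lattice

section Recession

variable {E : Type*} [NormedAddCommGroup E] [NormedSpace ℝ E]

theorem exists_seq_tendsto_direction_of_not_isBounded [ProperSpace E] {s : Set E}
    (hs : ¬IsBounded s) :
    ∃ (x : ℕ → E) (r : E), (∀ n, x n ∈ s) ∧ ‖r‖ = 1 ∧ Tendsto (fun n => ‖x n‖) atTop atTop ∧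
      Tendsto (fun n => ‖x n‖⁻¹ • x n) atTop (𝓝 r) := by
  simp only [isBounded_iff_forall_norm_le, not_exists, not_forall, exists_prop, not_le] at hs
  choose x hxs hxn using fun n : ℕ => hs n
  have hx0 : ∀ n, ‖x n‖ ≠ 0 := fun n => (n.cast_nonneg.trans_lt (hxn n)).ne'
  have hsphere : ∀ n, ‖x n‖⁻¹ • x n ∈ Metric.sphere (0 : E) 1 := fun n => by
    simp [norm_smul, hx0 n]
  obtain ⟨r, hr, φ, hφ, hlim⟩ := (isCompact_sphere (0 : E) 1).tendsto_subseq hsphere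
  refine ⟨x ∘ φ, r, fun n => hxs (φ n), by simpa using hr, ?_, hlim⟩
  refine tendsto_atTop_mono (fun n => ?_) tendsto_natCast_atTop_atTop
  exact (Nat.cast_le.mpr hφ.le_apply).trans (hxn (φ n)).le

theorem exists_ne_zero_forall_nonpos_of_not_isBounded [FiniteDimensional ℝ E] {ι : Type*}
    (f : ι → E →ₗ[ℝ] ℝ) (b : ι → ℝ) (h : ¬IsBounded {x | ∀ i, f i x ≤ b i}) :
    ∃ r ≠ 0, ∀ i, f i r ≤ 0 := by
  obtain ⟨x, r, hx, hr, hnorm, hdir⟩ := exists_seq_tendsto_direction_of_not_isBounded h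
  refine ⟨r, norm_ne_zero_iff.mp (by simp [hr]), fun i => ?_⟩
  have hlim : Tendsto (fun n => f i (‖x n‖⁻¹ • x n)) atTop (𝓝 (f i r)) :=
    ((f i).continuous_of_finiteDimensional.tendsto r).comp hdir
  have hbound : Tendsto (fun n => ‖x n‖⁻¹ * b i) atTop (𝓝 0) := by
    simpa using hnorm.inv_tendsto_atTop.mul_const (b i)
  refine le_of_tendsto_of_tendsto' hlim hbound fun n => ?_
  rw [map_smul, smul_eq_mul]
  exact mul_le_mul_of_nonneg_left (hx n i) (inv_nonneg.mpr (norm_nonneg _))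

end Recession

section HalfStrip

variable {E : Type*} [AddCommGroup E] [Module ℝ E]

def halfStrip (p q r : E) : Set E :=
  segment ℝ p q + (fun t : ℝ => t • r) '' Set.Ici 0

theorem add_smul_sub_add_smul_mem_halfStrip (p q r : E) {s t : ℝ} (hs : s ∈ Set.Icc (0 : ℝ) 1)
    (ht : 0 ≤ t) : p + s • (q - p) + t • r ∈ halfStrip p q r :=
  Set.add_mem_add (by rw [segment_eq_image']; exact ⟨s, hs, rfl⟩) ⟨t, ht, rfl⟩

theorem halfStrip_subset_setOf_forall_le {ι : Type*} (f : ι → E →ₗ[ℝ] ℝ) (b : ι → ℝ) {p q r : E}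
    (hp : ∀ i, f i p ≤ b i) (hq : ∀ i, f i q ≤ b i) (hr : ∀ i, f i r ≤ 0) :
    halfStrip p q r ⊆ {x | ∀ i, f i x ≤ b i} := by
  have hconv : Convex ℝ {x | ∀ i, f i x ≤ b i} := by
    simpa only [Set.ofPred_forall] using
      convex_iInter fun i => convex_halfSpace_le (f i).isLinear (b i)
  rintro _ ⟨v, hv, _, ⟨t, ht, rfl⟩, rfl⟩ i
  have hvi := hconv.segment_subset hp hq hv i
  rw [map_add, map_smul, smul_eq_mul]
  nlinarith [mul_nonpos_of_nonneg_of_nonpos (Set.mem_Ici.mp ht) (hr i)]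

end HalfStrip

theorem infinite_setOf_nonneg_div {c : ℝ} (hc : c ≠ 0) : {k : ℤ | 0 ≤ (k : ℝ) / c}.Infinite := by
  rcases hc.lt_or_gt with hc | hc
  · refine (Set.Iic_infinite 0).mono fun k hk => div_nonneg_of_nonpos ?_ hc.le
    exact_mod_cast hk
  · refine (Set.Ici_infinite 0).mono fun k hk => div_nonneg ?_ hc.le
    exact_mod_cast hk

theorem exists_linearIndependent_and_decomposition {w : Fin 2 → ℤ} (hw : w ≠ 0) (r : Fin 2 → ℝ) :
    ∃ u : Fin 2 → ℤ, LinearIndependent ℤ ![w, u] ∧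
      ∃ α β : ℝ, r = α • ZtoR w + β • ZtoR u := by
  have hw' : w 0 ≠ 0 ∨ w 1 ≠ 0 := by
    by_contra! h
    exact hw (funext fun i => by fin_cases i <;> simp [h.1, h.2])
  have hN : (0 : ℤ) < w 0 ^ 2 + w 1 ^ 2 := by
    rcases hw' with h | h <;> positivity
  have hN' : (0 : ℝ) < (w 0 : ℝ) ^ 2 + (w 1 : ℝ) ^ 2 := by exact_mod_cast hN
  -- `u` is `w` turned by a right angle, and `α`, `β` are the coordinates of `r` in the orthogonal
  -- basis `(w, u)`.
  refine ⟨![-w 1, w 0], LinearIndependent.pair_iff.mpr fun a c h => ?_,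
    (r 0 * w 0 + r 1 * w 1) / ((w 0 : ℝ) ^ 2 + (w 1 : ℝ) ^ 2),
    (r 1 * w 0 - r 0 * w 1) / ((w 0 : ℝ) ^ 2 + (w 1 : ℝ) ^ 2), ?_⟩
  · have h0 := congrFun h 0
    have h1 := congrFun h 1
    simp only [Pi.add_apply, Pi.smul_apply, Matrix.cons_val_zero, Matrix.cons_val_one,
      smul_eq_mul, Pi.zero_apply] at h0 h1
    have ha : a * (w 0 ^ 2 + w 1 ^ 2) = 0 := by linear_combination w 0 * h0 + w 1 * h1
    have hc : c * (w 0 ^ 2 + w 1 ^ 2) = 0 := by linear_combination w 0 * h1 - w 1 * h0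
    exact ⟨(mul_eq_zero.mp ha).resolve_right hN.ne', (mul_eq_zero.mp hc).resolve_right hN.ne'⟩
  · ext i
    fin_cases i <;>
    · simp only [Fin.zero_eta, Fin.mk_one, Fin.isValue, Pi.add_apply, Pi.smul_apply, ZtoR_apply,
        smul_eq_mul, Matrix.cons_val_zero, Matrix.cons_val_one, Matrix.cons_val_fin_one,
        Int.cast_neg, mul_neg]
      field_simp
      ring

theorem infinite_setOf_mem_halfStrip {x y : Fin 2 → ℤ} (hxy : x ≠ y) {r : Fin 2 → ℝ} (hr : r ≠ 0) :
    {z : Fin 2 → ℤ | ZtoR z ∈ halfStrip (ZtoR x) (ZtoR y) r}.Infinite := by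
  obtain ⟨w, hw, rfl⟩ : ∃ w, w ≠ 0 ∧ y = x + w := ⟨y - x, sub_ne_zero.mpr hxy.symm, by abel⟩
  obtain ⟨u, hwu, α, β, rfl⟩ := exists_linearIndependent_and_decomposition hw r
  rcases eq_or_ne β 0 with rfl | hβ
  · have hα : α ≠ 0 := by rintro rfl; simp at hr
    refine Set.infinite_of_injOn_mapsTo (f := fun k : ℤ => x + k • w)
      (fun k _ k' _ hk => smul_left_injective ℤ hw (add_left_cancel hk))
      (fun k hk => ?_) (infinite_setOf_nonneg_div hα)
    rw [Set.mem_ofPred_eq]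
    convert add_smul_sub_add_smul_mem_halfStrip (ZtoR x) (ZtoR (x + w))
      (α • ZtoR w + (0 : ℝ) • ZtoR u) (Set.left_mem_Icc.mpr zero_le_one) hk using 1
    simp only [ZtoR_add, ZtoR_zsmul, zero_smul, add_zero, smul_smul, div_mul_cancel₀ _ hα]
  -- `t = k / β` is the height at which the half-strip meets the line `x + k u + ℝ w`.
  · refine Set.infinite_of_injOn_mapsTo (f := fun k : ℤ => x + ⌈k / β * α⌉ • w + k • u)
      (fun k _ k' _ hk => ?_) (fun k hk => ?_) (infinite_setOf_nonneg_div hβ)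
    · have := LinearIndependent.pair_iff.mp hwu (⌈k / β * α⌉ - ⌈k' / β * α⌉) (k - k')
        (by simp only at hk; rw [sub_smul, sub_smul]; linear_combination (norm := module) hk)
      omega
    · set t : ℝ := k / β
      have hs : (⌈t * α⌉ - t * α : ℝ) ∈ Set.Icc (0 : ℝ) 1 :=
        ⟨sub_nonneg.mpr (Int.le_ceil _), by linarith [Int.ceil_lt_add_one (t * α)]⟩
      have htβ : t * β = k := div_mul_cancel₀ _ hβ
      rw [Set.mem_ofPred_eq]
      convert add_smul_sub_add_smul_mem_halfStrip (ZtoR x) (ZtoR (x + w))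
        (α • ZtoR w + β • ZtoR u) hs hk using 1
      simp only [ZtoR_add, ZtoR_zsmul, add_sub_cancel_left, smul_add, smul_smul]
      linear_combination (norm := module) (-htβ) • ZtoR u

theorem IsPolyhedron.exists_linearMap {d : ℕ} {P : Set (Fin d → ℝ)} (hP : IsPolyhedron P) :
    ∃ (k : ℕ) (f : Fin k → (Fin d → ℝ) →ₗ[ℝ] ℝ) (b : Fin k → ℝ), P = {x | ∀ i, f i x ≤ b i} := by
  obtain ⟨k, A, b, rfl⟩ := hP
  exact ⟨k, fun i => dotProductBilin ℝ ℝ (A i), b, rfl⟩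

theorem relaxation_bounded_dim2_general (X : Set (Fin 2 → ℤ)) (hfin : X.Finite)
    (hdim : 1 ≤ dimX X)
    (P : Set (Fin 2 → ℝ)) (hP : IsPolyhedron P)
    (hrel : {z : Fin 2 → ℤ | ZtoR z ∈ P} = X) :
    Bornology.IsBounded P := by
  by_contra hunb
  obtain ⟨k, f, b, rfl⟩ := hP.exists_linearMap
  obtain ⟨x, hx, y, hy, hxy⟩ := nontrivial_of_one_le_dimX hdim
  obtain ⟨r, hr, hrec⟩ := exists_ne_zero_forall_nonpos_of_not_isBounded f b hunb
  rw [← hrel] at hx hy hfin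
  refine (infinite_setOf_mem_halfStrip hxy hr).mono (fun z hz => ?_) hfin
  exact halfStrip_subset_setOf_forall_le f b hx hy hrec hz

/-- For a finite lattice-convex set `X ⊆ ℤ²` with `dim(X) ≥ 1`,
every polyhedral relaxation of `X` is bounded. -/
theorem relaxation_bounded_dim2 (X : Set (Fin 2 → ℤ)) (hfin : X.Finite)
    (hlc : IsLatticeConvex X) (hdim : 1 ≤ dimX X)
    (P : Set (Fin 2 → ℝ)) (hP : IsPolyhedron P)
    (hrel : {z : Fin 2 → ℤ | ZtoR z ∈ P} = X) :
    Bornology.IsBounded P :=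
  relaxation_bounded_dim2_general X hfin hdim P hP hrel
end

section
/- Let X = {0, e1, e2, e3, e1+e3+e4, e2+e3+e5} ⊆ Z^5 and r = (0,0,0,1,√2). Then the unbounded polyhedron conv(X) + R·r satisfies (conv(X) + R·r) ∩ Z^5 = X. -/
open scoped Pointwise

/-!
The six points of `X` are affinely independent, so `conv X` is a simplex, cut out by its six
facet inequalities. Among them are the McCormick inequalities for `x₃ = x₀ x₂` and
`x₄ = x₁ x₂`, which are exact at 0/1 points. If `z = x + t r` is integral with `x ∈ conv X`,
then `(x₀, x₁, x₂) = (z₀, z₁, z₂)` is integral, hence a 0/1 point, so `x` is the point of `X`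
above it; then `t = z₃ - x₃` and `t √2 = z₄ - x₄` are both integers, which forces `t = 0`.
-/

theorem not_isBounded_add_range_smul {E : Type*} [NormedAddCommGroup E] [NormedSpace ℝ E]
    {A : Set E} (hA : A.Nonempty) {r : E} (hr : r ≠ 0) :
    ¬ Bornology.IsBounded (A + Set.range fun t : ℝ => t • r) := by
  intro hb
  obtain ⟨a, ha⟩ := hA
  obtain ⟨C, hC⟩ := isBounded_iff_forall_norm_le.1 hb
  set t := (|C| + ‖a‖ + 1) / ‖r‖
  have hnorm : ‖t • r‖ = |C| + ‖a‖ + 1 := by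
    rw [norm_smul, Real.norm_of_nonneg (by positivity), div_mul_cancel₀ _ (norm_ne_zero_iff.2 hr)]
  have htri : ‖t • r‖ ≤ ‖a + t • r‖ + ‖a‖ := by simpa using norm_sub_le (a + t • r) a
  linarith [hC _ (Set.add_mem_add ha ⟨t, rfl⟩), le_abs_self C]

theorem int_eq_zero_of_intCast_eq_mul_irrational {x : ℝ} (hx : Irrational x) {m n : ℤ}
    (h : (m : ℝ) = n * x) : n = 0 := by
  by_contra hn
  exact (hx.intCast_mul hn).ne_int m h.symm

theorem eq_mul_of_mcCormick {p q w : ℝ} (hp : p = 0 ∨ p = 1) (hq : q = 0 ∨ q = 1)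
    (hw₀ : 0 ≤ w) (hwp : w ≤ p) (hwq : w ≤ q) (hpq : p + q - 1 ≤ w) : w = p * q := by
  rcases hp with rfl | rfl <;> rcases hq with rfl | rfl <;> linarith

def kaibelWeltgeSet : Set (Fin 5 → ℤ) :=
  {![0,0,0,0,0], ![1,0,0,0,0], ![0,1,0,0,0], ![0,0,1,0,0], ![1,0,1,1,0], ![0,1,1,0,1]}

/-- The barycentric coordinates of `x` with respect to the six points of `kaibelWeltgeSet` are
`x₃`, `x₄`, `x₀ - x₃`, `x₁ - x₄`, `x₂ - x₃ - x₄` and `1 - x₀ - x₁ - x₂ + x₃ + x₄`. -/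
def kaibelWeltgeSimplex : Set (Fin 5 → ℝ) :=
  {x | 0 ≤ x 3 ∧ 0 ≤ x 4 ∧ x 3 ≤ x 0 ∧ x 4 ≤ x 1 ∧ x 3 + x 4 ≤ x 2 ∧
    x 0 + x 1 + x 2 ≤ 1 + x 3 + x 4}

theorem convex_kaibelWeltgeSimplex : Convex ℝ kaibelWeltgeSimplex := by
  rintro x ⟨hx₁, hx₂, hx₃, hx₄, hx₅, hx₆⟩ y ⟨hy₁, hy₂, hy₃, hy₄, hy₅, hy₆⟩ a b ha hb hab
  refine ⟨?_, ?_, ?_, ?_, ?_, ?_⟩ <;> simp only [Pi.add_apply, Pi.smul_apply, smul_eq_mul] <;>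
    nlinarith

theorem convexHull_kaibelWeltgeSet_subset :
    convexHull ℝ (ZtoR '' kaibelWeltgeSet) ⊆ kaibelWeltgeSimplex := by
  refine convexHull_min ?_ convex_kaibelWeltgeSimplex
  rintro _ ⟨v, hv, rfl⟩
  rcases hv with rfl | rfl | rfl | rfl | rfl | rfl <;> simp [kaibelWeltgeSimplex, ZtoR]

theorem mem_kaibelWeltgeSet_of_binary {a b c : ℤ} (ha : a = 0 ∨ a = 1) (hb : b = 0 ∨ b = 1)
    (hc : c = 0 ∨ c = 1) (hab : a + b ≤ 1) : ![a, b, c, a * c, b * c] ∈ kaibelWeltgeSet := by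
  rcases ha with rfl | rfl <;> rcases hb with rfl | rfl <;> rcases hc with rfl | rfl <;>
    simp_all [kaibelWeltgeSet]

theorem mem_image_kaibelWeltgeSet_of_mem_kaibelWeltgeSimplex {x : Fin 5 → ℝ}
    (hx : x ∈ kaibelWeltgeSimplex) {a b c : ℤ} (ha : x 0 = a) (hb : x 1 = b) (hc : x 2 = c) :
    x ∈ ZtoR '' kaibelWeltgeSet := by
  obtain ⟨h₁, h₂, h₃, h₄, h₅, h₆⟩ := hx
  have ha₀ : (0 : ℝ) ≤ a := by linarith
  have hb₀ : (0 : ℝ) ≤ b := by linarith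
  have hc₀ : (0 : ℝ) ≤ c := by linarith
  have hc₁ : (c : ℝ) ≤ 1 := by linarith
  have hab : (a + b : ℝ) ≤ 1 := by linarith
  norm_cast at ha₀ hb₀ hc₀ hc₁ hab
  have ha' : a = 0 ∨ a = 1 := by omega
  have hb' : b = 0 ∨ b = 1 := by omega
  have hc' : c = 0 ∨ c = 1 := by omega
  have hbin : ∀ {n : ℤ}, n = 0 ∨ n = 1 → (n : ℝ) = 0 ∨ (n : ℝ) = 1 := by
    rintro n (rfl | rfl) <;> simp
  have hx₃ : x 3 = a * c :=
    eq_mul_of_mcCormick (hbin ha') (hbin hc') h₁ (ha ▸ h₃) (by linarith) (by linarith)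
  have hx₄ : x 4 = b * c :=
    eq_mul_of_mcCormick (hbin hb') (hbin hc') h₂ (hb ▸ h₄) (by linarith) (by linarith)
  refine ⟨_, mem_kaibelWeltgeSet_of_binary ha' hb' hc' hab, ?_⟩
  funext i
  fin_cases i <;> simp [ZtoR, ha, hb, hc, hx₃, hx₄]

theorem ZtoR_injective {d : ℕ} : Function.Injective (ZtoR (d := d)) :=
  fun _ _ h => funext fun i => Int.cast_injective (congrFun h i)

theorem mem_kaibelWeltgeSet_of_ZtoR_eq_add_smul {z : Fin 5 → ℤ} {x : Fin 5 → ℝ}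
    (hx : x ∈ convexHull ℝ (ZtoR '' kaibelWeltgeSet)) {t : ℝ}
    (hz : ZtoR z = x + t • ![0, 0, 0, 1, Real.sqrt 2]) : z ∈ kaibelWeltgeSet := by
  have hcoord : ∀ i, (z i : ℝ) = x i + t * ![0, 0, 0, 1, Real.sqrt 2] i := fun i => congrFun hz i
  obtain ⟨v, hv, rfl⟩ : x ∈ ZtoR '' kaibelWeltgeSet :=
    mem_image_kaibelWeltgeSet_of_mem_kaibelWeltgeSimplex (convexHull_kaibelWeltgeSet_subset hx)
      (by simpa using (hcoord 0).symm) (by simpa using (hcoord 1).symm)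
      (by simpa using (hcoord 2).symm)
  have h₃ : ((z 3 - v 3 : ℤ) : ℝ) = t := by simp [hcoord 3, ZtoR]
  have h₄ : ((z 4 - v 4 : ℤ) : ℝ) = (z 3 - v 3 : ℤ) * Real.sqrt 2 := by
    simp [h₃, hcoord 4, ZtoR]
  have ht : t = 0 := by
    rw [← h₃, int_eq_zero_of_intCast_eq_mul_irrational irrational_sqrt_two h₄, Int.cast_zero]
  rw [ht, zero_smul, add_zero] at hz
  rwa [ZtoR_injective hz]

/-- The five-dimensional example of Kaibel & Weltge:
`X = {0, e₁, e₂, e₃, e₁+e₃+e₄, e₂+e₃+e₅} ⊆ ℤ⁵` and `r = (0,0,0,1,√2)`.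
The unbounded polyhedron `conv(X) + ℝ·r` is a relaxation of `X`. -/
theorem five_dim_unbounded_relaxation :
    let X : Set (Fin 5 → ℤ) :=
      {![0,0,0,0,0], ![1,0,0,0,0], ![0,1,0,0,0], ![0,0,1,0,0], ![1,0,1,1,0], ![0,1,1,0,1]}
    let r : Fin 5 → ℝ := ![0, 0, 0, 1, Real.sqrt 2]
    let P : Set (Fin 5 → ℝ) :=
      convexHull ℝ (ZtoR '' X) + Set.range (fun t : ℝ => t • r)
    ¬ Bornology.IsBounded P ∧ {z : Fin 5 → ℤ | ZtoR z ∈ P} = X := by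
  intro X r P
  have hr : r ≠ 0 := fun h => by simpa [r] using congrFun h 3
  have hne : (convexHull ℝ (ZtoR '' X)).Nonempty :=
    (Set.image_nonempty.2 (Set.insert_nonempty _ _)).convexHull
  refine ⟨not_isBounded_add_range_smul hne hr, ?_⟩
  ext z
  constructor
  · rintro ⟨x, hx, _, ⟨t, rfl⟩, hz⟩
    exact mem_kaibelWeltgeSet_of_ZtoR_eq_add_smul hx hz.symm
  · intro hz
    exact ⟨_, subset_convexHull ℝ _ ⟨z, hz, rfl⟩, _, ⟨0, zero_smul ℝ r⟩, add_zero _⟩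
end

section
/- Let X ⊆ Z^d be a finite lattice-convex set and Ax ≤ b a system of linear inequalities. Then Ax ≤ b separates X from Z^d \ X if and only if Ax ≤ b separates X from obs(X), where obs(X) = {y ∈ Z^d \ X : conv(X ∪ {y}) ∩ Z^d = X ∪ {y}}. -/
/-- The set of observers of `X`: points `y ∈ ℤ^d \ X` such that `X ∪ {y}` is lattice-convex. -/
def obs {d : ℕ} (X : Set (Fin d → ℤ)) : Set (Fin d → ℤ) :=
  {y | y ∉ X ∧ IsLatticeConvex (X ∪ {y})}

/-- The system `Ax ≤ b` separates `X` from `Y`: all inequalities hold on `X` and at least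
one inequality is violated on each point of `Y`. -/
def Separates {d k : ℕ} (A : Fin k → Fin d → ℝ) (b : Fin k → ℝ)
    (X Y : Set (Fin d → ℤ)) : Prop :=
  (∀ x ∈ X, ∀ i, ∑ j, A i j * (x j : ℝ) ≤ b i) ∧
  ∀ y ∈ Y, ∃ i, b i < ∑ j, A i j * (y j : ℝ)

/-!
Suppose `Ax ≤ b` cuts off every observer but some `y ∉ X` satisfies it. Among the lattice points
of `conv(X ∪ {y})` outside `X` (finitely many, `y` among them) choose `z` whose hull
`conv(X ∪ {z})` is minimal for inclusion. Any further lattice point `w` of `conv(X ∪ {z})` outside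
`X` would have `conv(X ∪ {w}) = conv(X ∪ {z})`, and two points outside the convex set `conv X`
lying in each other's hull over `conv X` coincide; so `z` is an observer. But
`z ∈ conv(X ∪ {y})` lies in the polyhedron `Ax ≤ b`, which is convex and contains `X ∪ {y}`.
-/

open Matrix

theorem eq_of_mem_convexHull_insert_of_mem_convexHull_insert {𝕜 E : Type*} [Field 𝕜]
    [LinearOrder 𝕜] [IsStrictOrderedRing 𝕜] [AddCommGroup E] [Module 𝕜 E] {s : Set E} {x y : E}
    (hx : x ∉ convexHull 𝕜 s) (hy : y ∈ convexHull 𝕜 (insert x s))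
    (hxy : x ∈ convexHull 𝕜 (insert y s)) : y = x := by
  rcases s.eq_empty_or_nonempty with rfl | hs
  · simpa using hy
  rw [convexHull_insert hs, convexJoin_singleton_left, Set.mem_iUnion₂] at hy hxy
  obtain ⟨p, hp, a, c, ha, hc, hac, rfl⟩ := hy
  obtain ⟨q, hq, a', c', ha', hc', hac', hx_eq⟩ := hxy
  obtain ⟨r, hr, hr_eq⟩ :=
    (convex_convexHull 𝕜 s).exists_mem_add_smul_eq hp hq (mul_nonneg ha' hc) hc'
  have hx_comb : (a' * c + c') • x = (a' * c) • p + c' • q := by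
    have hsum : a' * c + c' = 1 - a' * a := by linear_combination a' * hac + hac'
    rw [hsum]
    linear_combination (norm := module) -hx_eq
  by_cases hzero : a' * c + c' = 0
  · have hc'0 : c' = 0 := by nlinarith [mul_nonneg ha' hc]
    have ha'1 : a' = 1 := by linarith
    have hc0 : c = 0 := by simpa [ha'1, hc'0] using hzero
    have ha1 : a = 1 := by linarith
    simp [ha1, hc0]
  · rw [← hx_comb] at hr_eq
    exact (hx (smul_right_injective E hzero hr_eq ▸ hr)).elim

theorem convexHull_insert_subset_of_mem {𝕜 E : Type*} [Field 𝕜] [LinearOrder 𝕜]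
    [IsStrictOrderedRing 𝕜] [AddCommGroup E] [Module 𝕜 E] {s : Set E} {x y : E}
    (hy : y ∈ convexHull 𝕜 (insert x s)) :
    convexHull 𝕜 (insert y s) ⊆ convexHull 𝕜 (insert x s) :=
  convexHull_min (Set.insert_subset hy ((Set.subset_insert x s).trans (subset_convexHull 𝕜 _)))
    (convex_convexHull 𝕜 _)

theorem convex_setOf_forall_dotProduct_le {𝕜 ι n : Type*} [Field 𝕜] [LinearOrder 𝕜]
    [IsStrictOrderedRing 𝕜] [Fintype n] (A : ι → n → 𝕜) (b : ι → 𝕜) :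
    Convex 𝕜 {p : n → 𝕜 | ∀ i, A i ⬝ᵥ p ≤ b i} := by
  rw [Set.ofPred_forall]
  exact convex_iInter fun i =>
    convex_halfSpace_le ⟨dotProduct_add (A i), fun c p => dotProduct_smul c (A i) p⟩ (b i)

theorem isometry_ZtoR {d : ℕ} : Isometry (ZtoR (d := d)) := fun x y => by
  rw [edist_pi_def, edist_pi_def]
  rfl

theorem finite_preimage_ZtoR {d : ℕ} {K : Set (Fin d → ℝ)} (hK : Bornology.IsBounded K) :
    (ZtoR ⁻¹' K).Finite :=
  ((isometry_ZtoR.antilipschitz.isBounded_preimage hK).isCompact_closure.finite_of_discrete).subset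
    subset_closure

theorem exists_mem_obs_mem_convexHull {d : ℕ} {X : Set (Fin d → ℤ)} (hfin : X.Finite)
    (hlc : IsLatticeConvex X) {y : Fin d → ℤ} (hy : y ∉ X) :
    ∃ z ∈ obs X, ZtoR z ∈ convexHull ℝ (insert (ZtoR y) (ZtoR '' X)) := by
  set H : (Fin d → ℤ) → Set (Fin d → ℝ) := fun w => convexHull ℝ (insert (ZtoR w) (ZtoR '' X))
  have hH_self (w : Fin d → ℤ) : ZtoR w ∈ H w := subset_convexHull ℝ _ (Set.mem_insert _ _)
  have hfin_y : {v | v ∉ X ∧ ZtoR v ∈ H y}.Finite :=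
    (finite_preimage_ZtoR (((hfin.image ZtoR).insert _).isCompact_convexHull ℝ).isBounded).subset
      fun v hv => hv.2
  obtain ⟨z, ⟨hzX, hzy⟩, hz_min⟩ := hfin_y.exists_minimalFor H _ ⟨y, hy, hH_self y⟩
  refine ⟨z, ⟨hzX, fun w hw => ?_⟩, hzy⟩
  rw [Set.union_singleton, Set.image_insert_eq] at hw
  rw [Set.union_singleton]
  by_cases hwX : w ∈ X
  · exact Or.inr hwX
  have hwz : H w ⊆ H z := convexHull_insert_subset_of_mem hw
  have hzw : H z ⊆ H w :=
    hz_min ⟨hwX, convexHull_insert_subset_of_mem hzy (hwz (hH_self w))⟩ hwz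
  exact Or.inl <| isometry_ZtoR.injective <|
    eq_of_mem_convexHull_insert_of_mem_convexHull_insert (fun h => hzX (hlc z h)) hw
      (hzw (hH_self z))

/-- A system `Ax ≤ b` separates a finite lattice-convex set `X` from `ℤ^d \ X`
iff it separates `X` from its set of observers. -/
theorem separates_iff_separates_obs {d k : ℕ} (X : Set (Fin d → ℤ)) (hfin : X.Finite)
    (hlc : IsLatticeConvex X) (A : Fin k → Fin d → ℝ) (b : Fin k → ℝ) :
    Separates A b X Xᶜ ↔ Separates A b X (obs X) := by
  refine ⟨fun ⟨hX, hcompl⟩ => ⟨hX, fun y hy => hcompl y hy.1⟩,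
    fun ⟨hX, hobs⟩ => ⟨hX, fun y hy => ?_⟩⟩
  by_contra! hyP
  obtain ⟨z, hz, hzy⟩ := exists_mem_obs_mem_convexHull hfin hlc hy
  have hsub : insert (ZtoR y) (ZtoR '' X) ⊆ {p | ∀ i, A i ⬝ᵥ p ≤ b i} :=
    Set.insert_subset hyP (Set.image_subset_iff.2 hX)
  obtain ⟨i, hi⟩ := hobs z hz
  exact hi.not_ge (convexHull_min hsub (convex_setOf_forall_dotProduct_le A b) hzy i)
end

section
/- Let X ⊆ Z^d be a full-dimensional finite lattice-convex set that is parity-complete, i.e., for every z ∈ Z^d there exists x ∈ X with (x − z)/2 ∈ Z^d. Then obs(X) ⊆ 2X − X = {2x' − x : x, x' ∈ X}; in particular obs(X) is finite. -/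
/-! Given an observer `y`, parity-completeness provides `x ∈ X` with `x ≡ y (mod 2)`. The midpoint
`(x + y) / 2` is then a lattice point of `conv(X ∪ {y})`, hence lies in `X ∪ {y}`; it is not `y`
because `x ≠ y`, so it is some `x' ∈ X`, and `y = 2x' - x`. Finiteness follows since `2X - X` is
the image of the finite set `X × X`. -/

theorem IsLatticeConvex.add_mem_of_eq_add_two_smul {d : ℕ} {S : Set (Fin d → ℤ)}
    (hS : IsLatticeConvex S) {x y c : Fin d → ℤ} (hx : x ∈ S) (hy : y ∈ S)
    (hxy : x = y + 2 • c) : y + c ∈ S := by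
  apply hS
  have hmid : ZtoR (y + c) = (1 / 2 : ℝ) • ZtoR x + (1 / 2 : ℝ) • ZtoR y := by
    funext i
    simp only [ZtoR, hxy, Pi.add_apply, Pi.smul_apply, two_nsmul, smul_eq_mul, Int.cast_add]
    ring
  rw [hmid]
  exact convex_convexHull ℝ _ (subset_convexHull ℝ _ (Set.mem_image_of_mem ZtoR hx))
    (subset_convexHull ℝ _ (Set.mem_image_of_mem ZtoR hy)) (by norm_num) (by norm_num)
    (by norm_num)

theorem exists_eq_two_smul_sub_of_mem_obs {d : ℕ} {X : Set (Fin d → ℤ)} {x y c : Fin d → ℤ}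
    (hy : y ∈ obs X) (hx : x ∈ X) (hxy : x = y + 2 • c) : ∃ x' ∈ X, y = 2 • x' - x := by
  obtain ⟨hyX, hlc⟩ := hy
  have hmid : y + c ∈ X ∪ {y} :=
    hlc.add_mem_of_eq_add_two_smul (Or.inl hx) (Or.inr rfl) hxy
  have hc : c ≠ 0 := by
    rintro rfl
    exact hyX (by simpa [hxy] using hx)
  refine ⟨y + c, hmid.resolve_right (by simpa using hc), ?_⟩
  rw [hxy]
  abel

theorem obs_subset_two_smul_sub_of_parity_complete {d : ℕ} {X : Set (Fin d → ℤ)}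
    (hpar : ∀ z : Fin d → ℤ, ∃ x ∈ X, ∀ i, (2 : ℤ) ∣ (x i - z i)) :
    obs X ⊆ {z | ∃ x ∈ X, ∃ x' ∈ X, z = 2 • x' - x} := by
  intro y hy
  obtain ⟨x, hx, hdvd⟩ := hpar y
  choose c hc using hdvd
  have hxy : x = y + 2 • c := by
    funext i
    simp only [Pi.add_apply, two_nsmul]
    linarith [hc i]
  exact ⟨x, hx, exists_eq_two_smul_sub_of_mem_obs hy hx hxy⟩

theorem obs_subset_of_parity_complete_general {d : ℕ} (X : Set (Fin d → ℤ)) (hfin : X.Finite)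
    (hpar : ∀ z : Fin d → ℤ, ∃ x ∈ X, ∀ i, (2 : ℤ) ∣ (x i - z i)) :
    obs X ⊆ {z | ∃ x ∈ X, ∃ x' ∈ X, z = 2 • x' - x} ∧ (obs X).Finite := by
  have hsub := obs_subset_two_smul_sub_of_parity_complete hpar
  refine ⟨hsub, (hfin.image2 (fun x x' => 2 • x' - x) hfin).subset (hsub.trans ?_)⟩
  rintro z ⟨x, hx, x', hx', rfl⟩
  exact ⟨x, hx, x', hx', rfl⟩

/-- For a full-dimensional finite lattice-convex parity-complete set `X ⊆ ℤ^d`,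
`obs(X) ⊆ 2X − X`; in particular `obs(X)` is finite. -/
theorem obs_subset_of_parity_complete {d : ℕ} (X : Set (Fin d → ℤ)) (hfin : X.Finite)
    (hlc : IsLatticeConvex X) (hfull : affineSpan ℝ (ZtoR '' X) = ⊤)
    (hpar : ∀ z : Fin d → ℤ, ∃ x ∈ X, ∀ i, (2 : ℤ) ∣ (x i - z i)) :
    obs X ⊆ {z | ∃ x ∈ X, ∃ x' ∈ X, z = 2 • x' - x} ∧ (obs X).Finite :=
  obs_subset_of_parity_complete_general X hfin hpar
end

section
/- Let X, Y be non-empty finite subsets of Q^d with X lattice-convex, and k a positive integer. If X can be separated from Y by a system of k linear inequalities with real coefficients, then X can be separated from Y by a system of k linear inequalities with rational coefficients. -/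
/-!
Raising every right-hand side by a small `t > 0` makes the real system separate `X` from `Y`
with all inequalities strict, and strict separation of finite sets is an open condition on the
coefficients `(A, b)`. Rational coefficients are dense, so some rational `(A', b')` still
separates strictly.
-/

open Set Filter Topology Matrix

section

variable {ι n : Type*} [Fintype n]

def StrictlySeparates (A : ι → n → ℝ) (b : ι → ℝ) (X Y : Set (n → ℝ)) : Prop :=
  (∀ x ∈ X, ∀ i, A i ⬝ᵥ x < b i) ∧ ∀ y ∈ Y, ∃ i, b i < A i ⬝ᵥ y

theorem exists_strictlySeparates_add_const {A : ι → n → ℝ} {b : ι → ℝ} {X Y : Set (n → ℝ)}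
    (hY : Y.Finite) (hXsep : ∀ x ∈ X, ∀ i, A i ⬝ᵥ x ≤ b i)
    (hYsep : ∀ y ∈ Y, ∃ i, b i < A i ⬝ᵥ y) :
    ∃ t : ℝ, StrictlySeparates A (fun i => b i + t) X Y := by
  have hnear : ∀ᶠ t in 𝓝 (0 : ℝ), ∀ y ∈ Y, ∃ i, b i + t < A i ⬝ᵥ y := by
    refine hY.eventually_all.2 fun y hy => ?_
    obtain ⟨i, hi⟩ := hYsep y hy
    filter_upwards [eventually_lt_nhds (sub_pos.2 hi)] with t ht
    exact ⟨i, by linarith⟩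
  obtain ⟨t, hYt, htpos⟩ :=
    ((hnear.filter_mono nhdsWithin_le_nhds).and (self_mem_nhdsWithin (s := Ioi 0))).exists
  exact ⟨t, fun x hx i => by linarith [hXsep x hx i, htpos], hYt⟩

variable [Finite ι]

theorem isOpen_setOf_strictlySeparates {X Y : Set (n → ℝ)} (hX : X.Finite) (hY : Y.Finite) :
    IsOpen {p : (ι → n → ℝ) × (ι → ℝ) | StrictlySeparates p.1 p.2 X Y} := by
  have hform : ∀ i (x : n → ℝ), Continuous fun p : (ι → n → ℝ) × (ι → ℝ) => p.1 i ⬝ᵥ x :=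
    fun i x => by unfold dotProduct; fun_prop
  have hrhs : ∀ i, Continuous fun p : (ι → n → ℝ) × (ι → ℝ) => p.2 i := fun i => by fun_prop
  simp only [StrictlySeparates, ofPred_and, ofPred_forall, ofPred_exists]
  exact (hX.isOpen_biInter fun x _ => isOpen_iInter_of_finite fun i => isOpen_lt (hform i x)
    (hrhs i)).inter (hY.isOpen_biInter fun y _ => isOpen_iUnion fun i => isOpen_lt (hrhs i)
    (hform i y))

theorem exists_rat_strictlySeparates {A : ι → n → ℝ} {b : ι → ℝ} {X Y : Set (n → ℝ)}
    (hX : X.Finite) (hY : Y.Finite) (hsep : StrictlySeparates A b X Y) :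
    ∃ (A' : ι → n → ℚ) (b' : ι → ℚ),
      StrictlySeparates (fun i j => A' i j) (fun i => b' i) X Y := by
  have hdense : DenseRange fun p : (ι → n → ℚ) × (ι → ℚ) =>
      ((fun i j => (p.1 i j : ℝ)), fun i => (p.2 i : ℝ)) :=
    (DenseRange.piMap fun _ => DenseRange.piMap fun _ => Rat.denseRange_cast).prodMap
      (DenseRange.piMap fun _ => Rat.denseRange_cast)
  obtain ⟨⟨A', b'⟩, hp⟩ :=
    hdense.exists_mem_open (isOpen_setOf_strictlySeparates hX hY) ⟨(A, b), hsep⟩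
  exact ⟨A', b', hp⟩

end

theorem rational_separation_general {d : ℕ} (X Y : Set (Fin d → ℚ))
    (hXfin : X.Finite) (hYfin : Y.Finite)
    (k : ℕ)
    (A : Fin k → Fin d → ℝ) (b : Fin k → ℝ)
    (hXsep : ∀ x ∈ X, ∀ i, ∑ j, A i j * (x j : ℝ) ≤ b i)
    (hYsep : ∀ y ∈ Y, ∃ i, b i < ∑ j, A i j * (y j : ℝ)) :
    ∃ (A' : Fin k → Fin d → ℚ) (b' : Fin k → ℚ),
      (∀ x ∈ X, ∀ i, ∑ j, A' i j * x j ≤ b' i) ∧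
      ∀ y ∈ Y, ∃ i, b' i < ∑ j, A' i j * y j := by
  set toReal : (Fin d → ℚ) → Fin d → ℝ := fun x => Rat.castHom ℝ ∘ x
  obtain ⟨t, hstrict⟩ := exists_strictlySeparates_add_const (hYfin.image toReal)
    (forall_mem_image.2 hXsep) (forall_mem_image.2 hYsep)
  obtain ⟨A', b', hXsep', hYsep'⟩ :=
    exists_rat_strictlySeparates (hXfin.image toReal) (hYfin.image toReal) hstrict
  have hcast : ∀ i x, (fun j => (A' i j : ℝ)) ⬝ᵥ toReal x = ((A' i ⬝ᵥ x : ℚ) : ℝ) :=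
    fun i x => (RingHom.map_dotProduct (Rat.castHom ℝ) _ _).symm
  refine ⟨A', b', fun x hx i => ?_, fun y hy => ?_⟩
  · have hxi := hXsep' (toReal x) (mem_image_of_mem toReal hx) i
    rw [hcast] at hxi
    exact Rat.cast_le.1 hxi.le
  · obtain ⟨i, hi⟩ := hYsep' (toReal y) (mem_image_of_mem toReal hy)
    rw [hcast] at hi
    exact ⟨i, Rat.cast_lt.1 hi⟩

/-- If two non-empty finite subsets `X, Y ⊆ ℚ^d` (with `X` lattice-convex) can be separated
by a system of `k` linear inequalities with real coefficients, then they can be separated by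
a system of `k` linear inequalities with rational coefficients. -/
theorem rational_separation {d : ℕ} (X Y : Set (Fin d → ℚ))
    (hXfin : X.Finite) (hYfin : Y.Finite) (hXne : X.Nonempty) (hYne : Y.Nonempty)
    (hlc : ∀ z : Fin d → ℤ,
      (fun i => (z i : ℚ)) ∈ convexHull ℚ X → (fun i => (z i : ℚ)) ∈ X)
    (k : ℕ) (hk : 0 < k)
    (A : Fin k → Fin d → ℝ) (b : Fin k → ℝ)
    (hXsep : ∀ x ∈ X, ∀ i, ∑ j, A i j * (x j : ℝ) ≤ b i)
    (hYsep : ∀ y ∈ Y, ∃ i, b i < ∑ j, A i j * (y j : ℝ)) :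
    ∃ (A' : Fin k → Fin d → ℚ) (b' : Fin k → ℚ),
      (∀ x ∈ X, ∀ i, ∑ j, A' i j * x j ≤ b' i) ∧
      ∀ y ∈ Y, ∃ i, b' i < ∑ j, A' i j * y j :=
  rational_separation_general X Y hXfin hYfin k A b hXsep hYsep
end

section
/- For all integers a ≤ b with {a,b} ≠ {0}, the set X_{a,b} = {e1, e2, e1+e2} ∪ {k·e3 : k = a,…,b} ⊆ Z^3 is lattice-convex and satisfies rc(X_{a,b}) = rc_Q(X_{a,b}) = 4. -/
/-- The set `X_{a,b} = {e₁, e₂, e₁+e₂} ∪ {k·e₃ : a ≤ k ≤ b} ⊆ ℤ³`. -/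
def Xab (a b : ℤ) : Set (Fin 3 → ℤ) :=
  {![1,0,0], ![0,1,0], ![1,1,0]} ∪ {z | ∃ k : ℤ, a ≤ k ∧ k ≤ b ∧ z = ![0,0,k]}

/-!
For the upper bound, two explicit systems of four integral inequalities cut out `Xab a b`, one
for `1 ≤ a` and one for `a ≤ 0 < b`; the reflection `z ↦ -z` covers `b ≤ 0`. A set cut out by
inequalities is lattice-convex.

For the lower bound, `e₁, e₂, e₁ + e₂` and `t e₃` with `t ≠ 0` are affinely independent, so the
equations of a relaxation are trivial and three inequalities would describe `Xab a b` as the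
lattice points of `{w | A w ≤ c}` with `A` a `3 × 3` matrix. If `A` is singular, this polyhedron
contains the line `p + ℝ y` through every `p ∈ conv (Xab a b)`; sliding the triangle
`conv {e₁, e₂, e₁ + e₂}` along `y` meets a lattice point outside `Xab a b`, either far out in the
plane `z = 0` or at a height beyond `[a, b]`. If `A` is invertible, the open cone `A y < 0`
contains an integer vector `u`, and `e₁ + n u ∈ Xab a b` for all `n` contradicts finiteness.
-/

open Matrix

section Relaxation

variable {d k : ℕ} {X : Set (Fin d → ℤ)}

lemma IsRelaxationQ.isRelaxation (h : IsRelaxationQ X k) : IsRelaxation X k := by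
  obtain ⟨m, A, c, U, v, rfl⟩ := h
  refine ⟨m, fun i j => A i j, fun i => c i, fun i j => U i j, fun i => v i, ?_⟩
  ext x
  simp only [Set.mem_ofPred_eq]
  have hcast (B : Fin d → ℚ) : ∑ j, (B j : ℝ) * (x j : ℝ) = ((∑ j, B j * x j : ℚ) : ℝ) := by
    push_cast; rfl
  simp only [hcast, Rat.cast_le, Rat.cast_inj]

lemma IsRelaxation.mono {l : ℕ} (h : IsRelaxation X k) (hkl : k ≤ l) : IsRelaxation X l := by
  obtain ⟨m, A, c, U, v, rfl⟩ := h
  refine ⟨m, fun i => if hi : (i : ℕ) < k then A ⟨i, hi⟩ else 0,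
    fun i => if hi : (i : ℕ) < k then c ⟨i, hi⟩ else 0, U, v, ?_⟩
  ext x
  simp only [Set.mem_ofPred_eq, and_congr_left_iff]
  refine fun _ => ⟨fun hA i => ?_, fun hA i => ?_⟩
  · by_cases hi : (i : ℕ) < k
    · simpa [hi] using hA ⟨i, hi⟩
    · simp [hi]
  · simpa using hA (Fin.castLE hkl i)

lemma IsRelaxation.isLatticeConvex (h : IsRelaxation X k) : IsLatticeConvex X := by
  obtain ⟨m, A, c, U, v, hX⟩ := h
  set P : Set (Fin d → ℝ) := {w | (∀ i, (A *ᵥ w) i ≤ c i) ∧ ∀ i, (U *ᵥ w) i = v i}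
  have hP : Convex ℝ P := by
    have hA : Convex ℝ {w : Fin d → ℝ | A *ᵥ w ≤ c} :=
      (convex_Iic c).linear_preimage (mulVecLin A)
    have hU : Convex ℝ {w : Fin d → ℝ | U *ᵥ w = v} :=
      (convex_singleton v).linear_preimage (mulVecLin U)
    convert hA.inter hU using 1
    ext w
    simp [P, Pi.le_def, funext_iff]
  intro z hz
  rw [hX]
  exact convexHull_min (by rintro _ ⟨x, hx, rfl⟩; rw [hX] at hx; exact hx) hP hz

lemma isRelaxationQ_of_forall_mem_iff (A : Matrix (Fin k) (Fin d) ℤ) (c : Fin k → ℤ)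
    (h : ∀ x, x ∈ X ↔ A *ᵥ x ≤ c) : IsRelaxationQ X k := by
  refine ⟨0, A.map (↑), fun i => c i, 0, 0, ?_⟩
  ext x
  simp only [h, Set.mem_ofPred_eq, IsEmpty.forall_iff, and_true, Pi.le_def]
  refine forall_congr' fun i => ?_
  rw [← Int.cast_le (R := ℚ), ← eq_intCast (Int.castRingHom ℚ), RingHom.map_mulVec]
  rfl

lemma IsRelaxationQ.preimage_mulVec {e : ℕ} (M : Matrix (Fin d) (Fin e) ℤ)
    (h : IsRelaxationQ X k) : IsRelaxationQ ((M *ᵥ ·) ⁻¹' X) k := by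
  obtain ⟨m, A, c, U, v, rfl⟩ := h
  have hcast {l : ℕ} (B : Fin l → Fin d → ℚ) (x : Fin e → ℤ) (i : Fin l) :
      ∑ j, (of B * M.map (Int.cast : ℤ → ℚ)) i j * (x j : ℚ) = ∑ j, B i j * ((M *ᵥ x) j : ℚ) := by
    simp only [mul_apply, of_apply, map_apply, mulVec, dotProduct, Int.cast_sum, Int.cast_mul,
      Finset.sum_mul, Finset.mul_sum, mul_assoc]
    exact Finset.sum_comm
  refine ⟨m, of A * M.map (Int.cast : ℤ → ℚ), c, of U * M.map (Int.cast : ℤ → ℚ), v, ?_⟩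
  ext x
  simp only [Set.mem_preimage, Set.mem_ofPred_eq, hcast]

lemma rc_eq_of_isRelaxation {n : ℕ} (h : IsRelaxation X (n + 1)) (h' : ¬ IsRelaxation X n) :
    rc X = n + 1 :=
  le_antisymm (Nat.sInf_le h) <| le_csInf ⟨_, h⟩ fun k hk => by
    by_contra! hkn
    exact h' (hk.mono (Nat.le_of_lt_succ hkn))

lemma rcQ_eq_of_isRelaxationQ {n : ℕ} (h : IsRelaxationQ X (n + 1))
    (h' : ¬ IsRelaxation X n) : rcQ X = n + 1 :=
  le_antisymm (Nat.sInf_le h) <| le_csInf ⟨_, h⟩ fun k hk => by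
    by_contra! hkn
    exact h' (hk.isRelaxation.mono (Nat.le_of_lt_succ hkn))

end Relaxation

lemma mem_Xab {a b x y z : ℤ} :
    ![x, y, z] ∈ Xab a b ↔
      (x = 1 ∧ y = 0 ∧ z = 0) ∨ (x = 0 ∧ y = 1 ∧ z = 0) ∨
      (x = 1 ∧ y = 1 ∧ z = 0) ∨ (x = 0 ∧ y = 0 ∧ a ≤ z ∧ z ≤ b) := by
  simp only [Xab, Set.mem_union, Set.mem_insert_iff, vecCons_inj, and_true,
    Set.mem_singleton_iff, Set.mem_ofPred_eq, existsAndEq]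
  tauto

lemma Xab_finite (a b : ℤ) : (Xab a b).Finite :=
  (Set.toFinite _).union <| ((Set.finite_Icc a b).image fun k => ![0, 0, k]).subset
    (by rintro _ ⟨k, hak, hkb, rfl⟩; exact ⟨k, ⟨hak, hkb⟩, rfl⟩)

lemma isRelaxationQ_Xab_of_rows {a b : ℤ} (M : Matrix (Fin 4) (Fin 3) ℤ) (c : Fin 4 → ℤ)
    (h : ∀ x y z, ![x, y, z] ∈ Xab a b ↔ ∀ i, M i 0 * x + M i 1 * y + M i 2 * z ≤ c i) :
    IsRelaxationQ (Xab a b) 4 := by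
  refine isRelaxationQ_of_forall_mem_iff M c fun v => ?_
  obtain ⟨x, y, z, rfl⟩ : ∃ x y z, v = ![x, y, z] :=
    ⟨v 0, v 1, v 2, by ext i; fin_cases i <;> rfl⟩
  rw [h, Pi.le_def]
  simp [mulVec, dotProduct, Fin.sum_univ_three]

lemma preimage_diagonal_Xab (a b : ℤ) :
    (diagonal ![1, 1, -1] *ᵥ ·) ⁻¹' Xab (-b) (-a) = Xab a b := by
  ext v
  obtain ⟨x, y, z, rfl⟩ : ∃ x y z, v = ![x, y, z] :=
    ⟨v 0, v 1, v 2, by ext i; fin_cases i <;> rfl⟩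
  have hv : diagonal ![1, 1, -1] *ᵥ ![x, y, z] = ![x, y, -z] := by
    ext i; fin_cases i <;> simp [mulVec_diagonal]
  rw [Set.mem_preimage, hv, mem_Xab, mem_Xab]
  omega

structure SystemPos (a b x y z : ℤ) : Prop where
  row₁ : b * x + z ≤ b
  row₂ : b * y + z ≤ b
  row₃ : 2 * a - 1 ≤ 4 * (b + 1) * (x + y) + 2 * z
  row₄ : x + y - 3 * z ≤ 2

lemma SystemPos.mem_Xab {a b x y z : ℤ} (ha : 1 ≤ a) (hab : a ≤ b) (h : SystemPos a b x y z) :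
    ![x, y, z] ∈ Xab a b := by
  obtain ⟨h1, h2, h3, h4⟩ := h
  rw [_root_.mem_Xab]
  have hz : 0 ≤ z := by
    by_contra! hz
    nlinarith [mul_le_mul_of_nonneg_left (show x + y ≤ 2 + 3 * z by omega)
      (show 0 ≤ 4 * (b + 1) by omega)]
  have hx : x ≤ 1 := by nlinarith
  have hy : y ≤ 1 := by nlinarith
  rcases hz.eq_or_lt with rfl | hz
  · have hxy : 0 < x + y := by nlinarith
    omega
  · have hx : x ≤ 0 := by nlinarith
    have hy : y ≤ 0 := by nlinarith
    have hx' : 0 ≤ x := by nlinarith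
    have hy' : 0 ≤ y := by nlinarith
    obtain ⟨rfl, rfl⟩ : x = 0 ∧ y = 0 := by omega
    omega

lemma mem_Xab_iff_systemPos {a b x y z : ℤ} (ha : 1 ≤ a) (hab : a ≤ b) :
    ![x, y, z] ∈ Xab a b ↔ SystemPos a b x y z := by
  refine ⟨fun hx => ?_, fun h => h.mem_Xab ha hab⟩
  rw [mem_Xab] at hx
  rcases hx with ⟨rfl, rfl, rfl⟩ | ⟨rfl, rfl, rfl⟩ | ⟨rfl, rfl, rfl⟩ | ⟨rfl, rfl, hz, hz'⟩ <;>
    constructor <;> nlinarith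

/-- Written in `u = (2b+1)x - y` and `w = x - (2-2a)y`: `row₁, row₂` bound `u` and `row₃, row₄`
bound `w` in terms of `z`, and `u - (2b+1)w = ((2b+1)(2-2a) - 1) y` then bounds `y`. -/
structure SystemMixed (a b x y z : ℤ) : Prop where
  row₁ : b * ((2 * b + 1) * x - y) + (2 * b + 1) * z ≤ b * (2 * b + 1)
  row₂ : z ≤ (b - a) * ((2 * b + 1) * x - y + 1)
  row₃ : (1 - a) * (1 + b - a) * (x - (2 - 2 * a) * y) ≤ (1 - a) * (1 + b - a) + z
  row₄ : -((2 * (3 - 2 * a) * (1 + b - a) - 1) * z) ≤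
    2 * ((1 - a) * (1 + b - a)) * (x - (2 - 2 * a) * y + 2 - 2 * a)

lemma nonneg_of_neg_one_le_of_le_one {a b x y : ℤ} (ha : a ≤ 0) (hb : 1 ≤ b)
    (hu : -1 ≤ (2 * b + 1) * x - y) (hw : x - (2 - 2 * a) * y ≤ 1) : 0 ≤ y := by
  by_contra! hy
  nlinarith [mul_le_mul_of_nonneg_left hw (show 0 ≤ 2 * b + 1 by omega),
    mul_le_mul_of_nonneg_left (show y ≤ -1 by omega)
      (show 0 ≤ (2 * b + 1) * (2 - 2 * a) - 1 by nlinarith)]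

namespace SystemMixed

variable {a b x y z : ℤ}

lemma z_le_b (hb : 1 ≤ b) (hab : a ≤ b) (h : SystemMixed a b x y z) : z ≤ b := by
  have h1 := h.row₁
  have h2 := h.row₂
  set u := (2 * b + 1) * x - y
  by_contra! hz
  have hu : 0 ≤ u := by nlinarith
  nlinarith

lemma a_le_z (ha : a ≤ 0) (hb : 1 ≤ b) (h : SystemMixed a b x y z) : a ≤ z := by
  have h3 := h.row₃
  have h4 := h.row₄
  set w := x - (2 - 2 * a) * y
  set E := 2 * (3 - 2 * a) * (1 + b - a) - 1
  by_contra! hz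
  -- `2 row₃ + row₄` eliminates `w`
  have hcomb : -((E + 2) * z) ≤ (1 - a) * (E + 1) := by linarith
  have hE : 0 ≤ E + 2 := by nlinarith
  nlinarith [mul_le_mul_of_nonneg_left (show 1 - a ≤ -z by omega) hE]

lemma u_nonneg_of_pos (hab : a < b) (hz : 1 ≤ z) (h : SystemMixed a b x y z) :
    0 ≤ (2 * b + 1) * x - y := by
  have h2 := h.row₂
  nlinarith

lemma u_le_of_pos (hb : 1 ≤ b) (hz : 1 ≤ z) (h : SystemMixed a b x y z) :
    (2 * b + 1) * x - y ≤ 2 * b - 2 := by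
  have h1 := h.row₁
  nlinarith

lemma x_nonpos_of_pos (ha : a ≤ 0) (hb : 1 ≤ b) (hz : 1 ≤ z) (hzb : z ≤ b)
    (h : SystemMixed a b x y z) : x ≤ 0 := by
  have h1 := h.row₁
  have h4 := h.row₄
  have hu := h.u_le_of_pos hb hz
  set P := (1 - a) * (1 + b - a)
  set E := 2 * (3 - 2 * a) * (1 + b - a) - 1
  have hP : 0 < P := mul_pos (by omega) (by omega)
  have hEP : E ≤ 6 * P - 1 := by nlinarith
  have hEz : E * z ≤ (6 * P - 1) * z := mul_le_mul_of_nonneg_right hEP (by omega)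
  by_contra! hx
  rcases (show x = 1 ∨ 2 ≤ x by omega) with rfl | hx2
  · have hy : 2 * z + 1 ≤ y := by nlinarith
    have hy' : 4 * z ≤ (2 - 2 * a) * (y - 1) := by
      nlinarith [mul_le_mul_of_nonneg_right (show 2 ≤ 2 - 2 * a by omega)
        (show 0 ≤ y - 1 by omega)]
    nlinarith [mul_le_mul_of_nonneg_left hy' hP.le, mul_le_mul_of_nonneg_left hz hP.le]
  · have hy : (2 * b + 1) * x - (2 * b - 2) ≤ y := by omega
    have hy' : 2 * (y - 1) ≤ (2 - 2 * a) * (y - 1) :=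
      mul_le_mul_of_nonneg_right (by omega) (by nlinarith)
    have hx' : 2 * (4 * b + 1) ≤ (4 * b + 1) * x := by nlinarith
    nlinarith [mul_le_mul_of_nonneg_left hy' hP.le, mul_le_mul_of_nonneg_left hzb
      (show 0 ≤ 6 * P - 1 by omega)]

lemma eq_zero_of_pos (ha : a ≤ 0) (hb : 1 ≤ b) (hz : 1 ≤ z) (hzb : z ≤ b)
    (h : SystemMixed a b x y z) : x = 0 ∧ y = 0 := by
  have h3 := h.row₃
  have hu := h.u_nonneg_of_pos (by omega) hz
  have hu' := h.u_le_of_pos hb hz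
  have hx := h.x_nonpos_of_pos ha hb hz hzb
  set P := (1 - a) * (1 + b - a)
  have hPb : b + 1 ≤ P := by nlinarith
  have hw : x - (2 - 2 * a) * y ≤ 1 := by nlinarith
  have hy := nonneg_of_neg_one_le_of_le_one ha hb (by omega) hw
  obtain rfl : x = 0 := by nlinarith
  omega

lemma mem_square_of_zero (ha : a ≤ 0) (hb : 1 ≤ b) (h : SystemMixed a b x y 0) :
    0 ≤ x ∧ x ≤ 1 ∧ 0 ≤ y ∧ y ≤ 1 := by
  have h1 := h.row₁
  have h2 := h.row₂
  have h3 := h.row₃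
  have h4 := h.row₄
  set P := (1 - a) * (1 + b - a)
  have hP : 0 < P := mul_pos (by omega) (by omega)
  have hu : -1 ≤ (2 * b + 1) * x - y := by nlinarith
  have hu' : (2 * b + 1) * x - y ≤ 2 * b + 1 := by nlinarith
  have hw : x - (2 - 2 * a) * y ≤ 1 := by nlinarith
  have hw' : 2 * a - 2 ≤ x - (2 - 2 * a) * y := by nlinarith
  have hy := nonneg_of_neg_one_le_of_le_one ha hb hu hw
  have hy' : y ≤ 1 := by
    by_contra! hy'
    nlinarith [mul_le_mul_of_nonneg_left hw' (show 0 ≤ 2 * b + 1 by omega),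
      mul_le_mul_of_nonneg_left (show 2 ≤ y by omega)
        (show 0 ≤ (2 * b + 1) * (2 - 2 * a) - 1 by nlinarith)]
  refine ⟨?_, ?_, hy, hy'⟩ <;> nlinarith

lemma eq_zero_of_neg (ha : a ≤ z) (hb : 1 ≤ b) (hz : z ≤ -1) (h : SystemMixed a b x y z) :
    x = 0 ∧ y = 0 := by
  have h1 := h.row₁
  have h2 := h.row₂
  have h3 := h.row₃
  have h4 := h.row₄
  set P := (1 - a) * (1 + b - a)
  have hP : 0 < P := mul_pos (by omega) (by omega)
  have hu : -1 ≤ (2 * b + 1) * x - y := by nlinarith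
  have hw : x - (2 - 2 * a) * y ≤ 0 := by nlinarith
  have hw' : 2 * a - 1 ≤ x - (2 - 2 * a) * y := by nlinarith
  have hy := nonneg_of_neg_one_le_of_le_one (ha.trans (by omega)) hb hu (by omega)
  have hy' : y ≤ 1 := by
    by_contra! hy'
    have hK : 0 ≤ b * ((2 * b + 1) * (2 - 2 * a) - 1) := mul_nonneg (by omega) (by nlinarith)
    nlinarith [mul_le_mul_of_nonneg_left hw' (show 0 ≤ b * (2 * b + 1) by positivity),
      mul_le_mul_of_nonneg_left (show 2 ≤ y by omega) hK,
      mul_le_mul_of_nonneg_left ha (show 0 ≤ 2 * b + 1 by omega),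
      mul_nonneg_of_nonpos_of_nonpos (show a + 1 ≤ 0 by omega) (show 1 - 2 * b ≤ 0 by omega)]
  obtain rfl | rfl : y = 0 ∨ y = 1 := by omega
  · constructor <;> nlinarith
  · have hx : 1 - 2 * z ≤ x := by
      by_contra! hx
      nlinarith [mul_le_mul_of_nonneg_left (show x ≤ -2 * z by omega) hP.le]
    nlinarith [mul_le_mul_of_nonneg_left hx (show 0 ≤ b * (2 * b + 1) by positivity),
      mul_le_mul_of_nonneg_left (show 1 ≤ -z by omega)
        (show 0 ≤ (2 * b + 1) * (2 * b - 1) by nlinarith)]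

end SystemMixed

lemma SystemMixed.mem_Xab {a b x y z : ℤ} (ha : a ≤ 0) (hb : 1 ≤ b) (h : SystemMixed a b x y z) :
    ![x, y, z] ∈ Xab a b := by
  have hzb := h.z_le_b hb (by omega)
  have haz := h.a_le_z ha hb
  rw [_root_.mem_Xab]
  rcases lt_trichotomy z 0 with hz | rfl | hz
  · obtain ⟨rfl, rfl⟩ := h.eq_zero_of_neg haz hb (by omega)
    omega
  · obtain ⟨hx, hx', hy, hy'⟩ := h.mem_square_of_zero ha hb
    omega
  · obtain ⟨rfl, rfl⟩ := h.eq_zero_of_pos ha hb hz hzb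
    omega

lemma mem_Xab_iff_systemMixed {a b x y z : ℤ} (ha : a ≤ 0) (hb : 1 ≤ b) :
    ![x, y, z] ∈ Xab a b ↔ SystemMixed a b x y z := by
  refine ⟨fun hx => ?_, fun h => h.mem_Xab ha hb⟩
  have hP : 1 + b - a ≤ (1 - a) * (1 + b - a) := by nlinarith
  rw [mem_Xab] at hx
  rcases hx with ⟨rfl, rfl, rfl⟩ | ⟨rfl, rfl, rfl⟩ | ⟨rfl, rfl, rfl⟩ | ⟨rfl, rfl, hz, hz'⟩ <;>
    constructor <;> nlinarith

lemma isRelaxationQ_Xab_of_one_le {a b : ℤ} (ha : 1 ≤ a) (hab : a ≤ b) :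
    IsRelaxationQ (Xab a b) 4 := by
  refine isRelaxationQ_Xab_of_rows
    !![b, 0, 1; 0, b, 1; -(4 * (b + 1)), -(4 * (b + 1)), -2; 1, 1, -3] ![b, b, 1 - 2 * a, 2]
    fun x y z => ?_
  simp only [mem_Xab_iff_systemPos ha hab, Fin.forall_fin_succ, Fin.isValue, of_apply, cons_val',
    cons_val_zero, cons_val_fin_one, cons_val_one, cons_val, cons_val_succ, IsEmpty.forall_iff,
    and_true]
  exact ⟨fun ⟨h1, h2, h3, h4⟩ => ⟨by linarith, by linarith, by linarith, by linarith⟩,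
    fun ⟨h1, h2, h3, h4⟩ => ⟨by linarith, by linarith, by linarith, by linarith⟩⟩

lemma isRelaxationQ_Xab_of_nonpos_of_pos {a b : ℤ} (ha : a ≤ 0) (hb : 1 ≤ b) :
    IsRelaxationQ (Xab a b) 4 := by
  refine isRelaxationQ_Xab_of_rows
    !![b * (2 * b + 1), -b, 2 * b + 1;
      -((b - a) * (2 * b + 1)), b - a, 1;
      (1 - a) * (1 + b - a), -((1 - a) * (1 + b - a) * (2 - 2 * a)), -1;
      -(2 * (1 - a) * (1 + b - a)), 2 * (1 - a) * (1 + b - a) * (2 - 2 * a),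
        -(2 * (3 - 2 * a) * (1 + b - a) - 1)]
    ![b * (2 * b + 1), b - a, (1 - a) * (1 + b - a), 2 * (1 - a) * (1 + b - a) * (2 - 2 * a)]
    fun x y z => ?_
  simp only [mem_Xab_iff_systemMixed ha hb, Fin.forall_fin_succ, Fin.isValue, of_apply, cons_val',
    cons_val_zero, cons_val_fin_one, cons_val_one, cons_val, cons_val_succ, IsEmpty.forall_iff,
    and_true]
  exact ⟨fun ⟨h1, h2, h3, h4⟩ => ⟨by linarith, by linarith, by linarith, by linarith⟩,
    fun ⟨h1, h2, h3, h4⟩ => ⟨by linarith, by linarith, by linarith, by linarith⟩⟩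

lemma isRelaxationQ_Xab_of_one_le_right {a b : ℤ} (hab : a ≤ b) (hb : 1 ≤ b) :
    IsRelaxationQ (Xab a b) 4 := by
  rcases le_or_gt a 0 with ha | ha
  · exact isRelaxationQ_Xab_of_nonpos_of_pos ha hb
  · exact isRelaxationQ_Xab_of_one_le ha hab

lemma isRelaxationQ_Xab {a b : ℤ} (hab : a ≤ b) (h0 : ¬(a = 0 ∧ b = 0)) :
    IsRelaxationQ (Xab a b) 4 := by
  rcases le_or_gt 1 b with hb | hb
  · exact isRelaxationQ_Xab_of_one_le_right hab hb
  · rw [← preimage_diagonal_Xab]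
    exact (isRelaxationQ_Xab_of_one_le_right (by omega) (by omega)).preimage_mulVec _

section Polyhedron

variable {d k : ℕ} {X : Set (Fin d → ℤ)} {A : Matrix (Fin k) (Fin d) ℝ} {c : Fin k → ℝ}

lemma ZtoR_add_nsmul (x u : Fin d → ℤ) (n : ℕ) :
    ZtoR (x + n • u) = ZtoR x + (n : ℝ) • ZtoR u := by
  ext j; simp [ZtoR]

lemma mem_of_mem_convexHull_add_smul (hX : ∀ x, x ∈ X ↔ A *ᵥ ZtoR x ≤ c)
    {p y : Fin d → ℝ} (hp : p ∈ convexHull ℝ (ZtoR '' X)) (hy : A *ᵥ y ≤ 0)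
    {t : ℝ} (ht : 0 ≤ t) {z : Fin d → ℤ} (hz : ZtoR z = p + t • y) : z ∈ X := by
  have hconv : Convex ℝ {w : Fin d → ℝ | A *ᵥ w ≤ c} :=
    (convex_Iic c).linear_preimage (mulVecLin A)
  have hpc : A *ᵥ p ≤ c :=
    convexHull_min (by rintro _ ⟨x, hx, rfl⟩; exact (hX x).1 hx) hconv hp
  rw [hX, hz, mulVec_add, mulVec_smul]
  simpa using add_le_add hpc (smul_nonpos_of_nonneg_of_nonpos ht hy)

lemma mem_of_mem_convexHull_add_smul_of_mulVec_eq_zero (hX : ∀ x, x ∈ X ↔ A *ᵥ ZtoR x ≤ c)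
    {p y : Fin d → ℝ} (hp : p ∈ convexHull ℝ (ZtoR '' X)) (hy : A *ᵥ y = 0)
    (t : ℝ) {z : Fin d → ℤ} (hz : ZtoR z = p + t • y) : z ∈ X := by
  rcases le_total 0 t with ht | ht
  · exact mem_of_mem_convexHull_add_smul hX hp hy.le ht hz
  · refine mem_of_mem_convexHull_add_smul hX hp (y := -y) (by rw [mulVec_neg, hy, neg_zero])
      (neg_nonneg.2 ht) ?_
    rw [hz, neg_smul_neg]

/-- Round a large multiple of `y`. -/
lemma exists_int_mulVec_neg {y : Fin d → ℝ} (hy : ∀ i, (A *ᵥ y) i < 0) :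
    ∃ u : Fin d → ℤ, ∀ i, (A *ᵥ ZtoR u) i < 0 := by
  have hopen : IsOpen {w : Fin d → ℝ | ∀ i, (A *ᵥ w) i < 0} := by
    simp only [Set.ofPred_forall]
    exact isOpen_iInter_of_finite fun i =>
      isOpen_lt (by simp only [mulVec, dotProduct]; fun_prop) continuous_const
  obtain ⟨ε, hε, hball⟩ := Metric.isOpen_iff.1 hopen y hy
  obtain ⟨N, hN⟩ := exists_nat_gt (1 / ε)
  have hN0 : (0 : ℝ) < N := (one_div_pos.2 hε).trans hN
  set u : Fin d → ℤ := fun j => round (N * y j)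
  have hu : (N : ℝ)⁻¹ • ZtoR u ∈ Metric.ball y ε := by
    rw [Metric.mem_ball, dist_pi_lt_iff hε]
    intro j
    have hround := abs_sub_round ((N : ℝ) * y j)
    rw [Real.dist_eq, Pi.smul_apply, smul_eq_mul, ZtoR,
      show (N : ℝ)⁻¹ * round (N * y j) - y j = -((N : ℝ)⁻¹ * (N * y j - round (N * y j))) by
        field_simp; ring, abs_neg, abs_mul, abs_inv, abs_of_pos hN0]
    rw [one_div_lt hε hN0] at hN
    calc (N : ℝ)⁻¹ * |N * y j - round (N * y j)| ≤ (N : ℝ)⁻¹ * (1 / 2) := by gcongr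
      _ < ε := by rw [← one_div]; linarith [one_div_pos.2 hN0]
  refine ⟨u, fun i => ?_⟩
  have hneg := hball hu i
  rw [mulVec_smul, Pi.smul_apply, smul_eq_mul] at hneg
  exact neg_of_mul_neg_right hneg (inv_nonneg.2 hN0.le)

lemma eq_zero_of_forall_add_nsmul_mem (hX : X.Finite) {x u : Fin d → ℤ}
    (h : ∀ n : ℕ, x + n • u ∈ X) : u = 0 := by
  by_contra hu
  obtain ⟨j, hj⟩ := Function.ne_iff.1 hu
  refine hX.not_infinite (Set.infinite_of_injective_forall_mem (fun n m hnm => ?_) h)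
  have : (n : ℤ) * u j = m * u j := by simpa using congrFun hnm j
  exact_mod_cast mul_right_cancel₀ hj this

end Polyhedron

section LowerBound

variable {a b : ℤ}

lemma exists_ne_zero_mem_Icc (hab : a ≤ b) (h0 : ¬(a = 0 ∧ b = 0)) :
    ∃ t : ℤ, t ≠ 0 ∧ a ≤ t ∧ t ≤ b := by
  by_cases hb : b = 0
  · exact ⟨a, by omega, le_rfl, hab⟩
  · exact ⟨b, hb, hab, le_rfl⟩

lemma affine_eq_of_forall_mem_Xab (hab : a ≤ b) (h0 : ¬(a = 0 ∧ b = 0)) {u : Fin 3 → ℝ} {v : ℝ}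
    (h : ∀ x ∈ Xab a b, ∑ j, u j * (x j : ℝ) = v) (x : Fin 3 → ℤ) :
    ∑ j, u j * (x j : ℝ) = v := by
  obtain ⟨t, ht0, hat, htb⟩ := exists_ne_zero_mem_Icc hab h0
  have h1 := h ![1, 0, 0] (mem_Xab.2 (by simp))
  have h2 := h ![0, 1, 0] (mem_Xab.2 (by simp))
  have h3 := h ![1, 1, 0] (mem_Xab.2 (by simp))
  have h4 := h ![0, 0, t] (mem_Xab.2 (by simp [hat, htb]))
  simp only [Fin.sum_univ_three, cons_val_zero, cons_val_one, cons_val, Int.cast_one,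
    Int.cast_zero, mul_one, mul_zero, add_zero, zero_add] at h1 h2 h3 h4 ⊢
  have hv : v = 0 := by linarith
  have hu2 : u 2 = 0 := by
    rcases mul_eq_zero.1 (h4.trans hv) with h | h
    · exact h
    · exact absurd (by exact_mod_cast h) ht0
  rw [hu2, hv, show u 0 = 0 by linarith, show u 1 = 0 by linarith]
  ring

lemma IsRelaxation.exists_mulVec_le_of_Xab {k : ℕ} (hab : a ≤ b) (h0 : ¬(a = 0 ∧ b = 0))
    (h : IsRelaxation (Xab a b) k) :
    ∃ (A : Matrix (Fin k) (Fin 3) ℝ) (c : Fin k → ℝ), ∀ x, x ∈ Xab a b ↔ A *ᵥ ZtoR x ≤ c := by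
  obtain ⟨m, A, c, U, v, hX⟩ := h
  refine ⟨A, c, fun x => ?_⟩
  have hU : ∀ i, ∑ j, U i j * (x j : ℝ) = v i := fun i =>
    affine_eq_of_forall_mem_Xab hab h0 (fun x hx => (hX ▸ hx).2 i) x
  rw [hX]
  simp only [Set.mem_ofPred_eq, hU, implies_true, and_true, Pi.le_def]
  rfl

lemma mem_convexHull_Xab_of_le {s r : ℝ} (hs : s ≤ 1) (hr : r ≤ 1) (hsr : 1 ≤ s + r) :
    ![s, r, 0] ∈ convexHull ℝ (ZtoR '' Xab a b) := by
  have hmem : ∀ x ∈ Xab a b, ZtoR x ∈ convexHull ℝ (ZtoR '' Xab a b) := fun x hx =>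
    subset_convexHull ℝ _ ⟨x, hx, rfl⟩
  have key := (convex_convexHull ℝ (ZtoR '' Xab a b)).sum_mem (t := Finset.univ)
    (w := ![1 - r, 1 - s, s + r - 1])
    (z := ![ZtoR ![1, 0, 0], ZtoR ![0, 1, 0], ZtoR ![1, 1, 0]])
    (by intro i _; fin_cases i <;> simp <;> linarith) (by simp [Fin.sum_univ_three]; ring)
    (by intro i _; fin_cases i <;> exact hmem _ (mem_Xab.2 (by simp)))
  convert key using 1
  ext j; fin_cases j <;> simp [Fin.sum_univ_three, ZtoR]

lemma exists_not_mem_Xab_of_horizontal {y : Fin 3 → ℝ} (hy : y ≠ 0) (hy2 : y 2 = 0) :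
    ∃ z ∉ Xab a b, ∃ p ∈ convexHull ℝ (ZtoR '' Xab a b), ∃ t : ℝ, ZtoR z = p + t • y := by
  by_cases hy0 : y 0 = 0
  · have hy1 : y 1 ≠ 0 := fun hy1 => hy (by ext j; fin_cases j <;> simp [hy0, hy1, hy2])
    refine ⟨![0, 3, 0], by simp [mem_Xab], ![0, 1, 0],
      mem_convexHull_Xab_of_le (by norm_num) le_rfl (by norm_num), 2 / y 1, ?_⟩
    ext j
    fin_cases j <;> simp [ZtoR, hy0, hy2, hy1]
    norm_num
  · set t := -2 / y 0
    refine ⟨![-1, ⌈t * y 1⌉, 0], by simp [mem_Xab], ![1, ⌈t * y 1⌉ - t * y 1, 0],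
      mem_convexHull_Xab_of_le le_rfl ?_ ?_, t, ?_⟩
    · linarith [Int.ceil_lt_add_one (t * y 1)]
    · linarith [Int.le_ceil (t * y 1)]
    · ext j
      fin_cases j <;> simp [ZtoR, t, hy0, hy2]
      norm_num

lemma Int.fract_add_fract_le_one_or (r s : ℝ) :
    Int.fract r + Int.fract s ≤ 1 ∨ Int.fract (-r) + Int.fract (-s) ≤ 1 := by
  by_cases hr : Int.fract r = 0
  · exact Or.inl (by linarith [Int.fract_lt_one s])
  by_cases hs : Int.fract s = 0
  · exact Or.inl (by linarith [Int.fract_lt_one r])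
  rw [Int.fract_neg hr, Int.fract_neg hs]
  by_contra! h
  linarith [h.1]

lemma exists_mem_convexHull_Xab_add_smul {y : Fin 3 → ℝ} {t : ℝ}
    (h : Int.fract (t * y 0) + Int.fract (t * y 1) ≤ 1) {n : ℤ} (hn : t * y 2 = n) :
    ∃ p ∈ convexHull ℝ (ZtoR '' Xab a b),
      ZtoR ![1 + ⌊t * y 0⌋, 1 + ⌊t * y 1⌋, n] = p + t • y := by
  refine ⟨![1 - Int.fract (t * y 0), 1 - Int.fract (t * y 1), 0],
    mem_convexHull_Xab_of_le ?_ ?_ (by linarith), ?_⟩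
  · linarith [Int.fract_nonneg (t * y 0)]
  · linarith [Int.fract_nonneg (t * y 1)]
  · ext j; fin_cases j <;> simp [ZtoR, hn, ← Int.self_sub_floor] <;> ring

lemma exists_not_mem_Xab_of_vertical {y : Fin 3 → ℝ} (hy2 : y 2 ≠ 0) :
    ∃ z ∉ Xab a b, ∃ p ∈ convexHull ℝ (ZtoR '' Xab a b), ∃ t : ℝ, ZtoR z = p + t • y := by
  set H : ℤ := 1 + |a| + |b|
  have hHa : -H < a := by linarith [neg_abs_le a, abs_nonneg b]
  have hHb : b < H := by linarith [le_abs_self b, abs_nonneg a]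
  have hH : H ≠ 0 := by linarith [abs_nonneg a, abs_nonneg b]
  rcases Int.fract_add_fract_le_one_or (H / y 2 * y 0) (H / y 2 * y 1) with h | h
  · obtain ⟨p, hp, hz⟩ := exists_mem_convexHull_Xab_add_smul (a := a) (b := b) h
      (n := H) (by field_simp)
    exact ⟨_, by simp [mem_Xab]; omega, p, hp, _, hz⟩
  · obtain ⟨p, hp, hz⟩ := exists_mem_convexHull_Xab_add_smul (a := a) (b := b)
      (t := -(H / y 2)) (by simpa only [neg_mul] using h) (n := -H) (by push_cast; field_simp)
    exact ⟨_, by simp [mem_Xab]; omega, p, hp, _, hz⟩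

lemma exists_not_mem_Xab_on_line {y : Fin 3 → ℝ} (hy : y ≠ 0) :
    ∃ z ∉ Xab a b, ∃ p ∈ convexHull ℝ (ZtoR '' Xab a b), ∃ t : ℝ, ZtoR z = p + t • y := by
  by_cases hy2 : y 2 = 0
  · exact exists_not_mem_Xab_of_horizontal hy hy2
  · exact exists_not_mem_Xab_of_vertical hy2

lemma not_isRelaxation_Xab_three (hab : a ≤ b) (h0 : ¬(a = 0 ∧ b = 0)) :
    ¬ IsRelaxation (Xab a b) 3 := by
  intro h
  obtain ⟨A, c, hX⟩ := h.exists_mulVec_le_of_Xab hab h0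
  by_cases hdet : A.det = 0
  · obtain ⟨y, hy0, hAy⟩ := exists_mulVec_eq_zero_iff.2 hdet
    obtain ⟨z, hz, p, hp, t, hzp⟩ := exists_not_mem_Xab_on_line (a := a) (b := b) hy0
    exact hz (mem_of_mem_convexHull_add_smul_of_mulVec_eq_zero hX hp hAy t hzp)
  · have hAy : ∀ i, (A *ᵥ (A⁻¹ *ᵥ fun _ => -1)) i < 0 := by
      simp [mulVec_mulVec, mul_nonsing_inv _ (isUnit_iff_ne_zero.2 hdet)]
    obtain ⟨u, hu⟩ := exists_int_mulVec_neg hAy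
    have he₁ : ![1, 0, 0] ∈ Xab a b := mem_Xab.2 (by simp)
    have hray : ∀ n : ℕ, ![1, 0, 0] + n • u ∈ Xab a b := fun n =>
      mem_of_mem_convexHull_add_smul hX (subset_convexHull ℝ _ ⟨_, he₁, rfl⟩)
        (fun i => (hu i).le) n.cast_nonneg (ZtoR_add_nsmul _ _ n)
    have hu0 := hu 0
    rw [eq_zero_of_forall_add_nsmul_mem (Xab_finite a b) hray,
      show ZtoR (0 : Fin 3 → ℤ) = 0 by ext; simp [ZtoR], mulVec_zero] at hu0
    exact lt_irrefl _ hu0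

end LowerBound

/-- For all integers `a ≤ b` with `{a,b} ≠ {0}`, the set `X_{a,b}` is lattice-convex
and `rc(X_{a,b}) = rc_ℚ(X_{a,b}) = 4`. -/
theorem rc_Xab (a b : ℤ) (hab : a ≤ b) (h0 : ¬(a = 0 ∧ b = 0)) :
    IsLatticeConvex (Xab a b) ∧ rc (Xab a b) = 4 ∧ rcQ (Xab a b) = 4 := by
  have hQ := isRelaxationQ_Xab hab h0
  have h3 := not_isRelaxation_Xab_three hab h0
  exact ⟨hQ.isRelaxation.isLatticeConvex, rc_eq_of_isRelaxation hQ.isRelaxation h3,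
    rcQ_eq_of_isRelaxationQ hQ h3⟩
end

section
/- Let C(y,z) be a Boolean combination of linear inequalities with rational coefficients in variables (y,z) ∈ R^k × R, such that fixing y (and auxiliary real parameters) each conjunctive clause defines a closed interval in z. If for some y ∈ R^k the union of finitely many intervals S_1(y),…,S_s(y) ⊆ R (each a closed interval, possibly empty, a half-line, or R) covers Z, then either some S_j(y) = R, or there exist indices j_1,…,j_{n+1} with n < s and integers v_1 < v_2 < … < v_n such that S_{j_1}(y) is unbounded below with maximal integer v_1, each S_{j_i}(y) (2 ≤ i ≤ n) contains v_{i-1}+1 and has maximal integer v_i, and S_{j_{n+1}}(y) is unbounded above and contains v_n + 1. -/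
/-! Greedy construction. Covering the integers, some interval is unbounded below; unless it is
all of `ℝ` it is bounded above and so has a largest integer `v₁`. Whichever interval covers
`v₁ + 1` is either unbounded above, ending the chain, or has a largest integer `v₂ > v₁`, and so
on. An interval used at one step contains no integer beyond its own `vᵢ`, so it is never used
again: the intervals of the chain are pairwise distinct and the process stops. -/

open Set

theorem Set.OrdConnected.eq_univ_of_not_bddBelow_of_not_bddAbove {α : Type*} [LinearOrder α]
    {S : Set α} (hS : S.OrdConnected) (hbelow : ¬BddBelow S) (habove : ¬BddAbove S) :
    S = univ :=
  eq_univ_of_forall fun x => by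
    obtain ⟨a, ha, hax⟩ := not_bddBelow_iff.1 hbelow x
    obtain ⟨b, hb, hxb⟩ := not_bddAbove_iff.1 habove x
    exact hS.out ha hb ⟨hax.le, hxb.le⟩

section IntervalsOfReals

variable {S : Set ℝ}

theorem Set.OrdConnected.exists_int_mem_of_not_bddBelow (hS : S.OrdConnected)
    (hbelow : ¬BddBelow S) : ∃ m : ℤ, (m : ℝ) ∈ S := by
  obtain ⟨a, ha, -⟩ := not_bddBelow_iff.1 hbelow 0
  obtain ⟨b, hb, hba⟩ := not_bddBelow_iff.1 hbelow ⌊a⌋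
  exact ⟨⌊a⌋, hS.out hb ha ⟨hba.le, Int.floor_le a⟩⟩

theorem exists_isGreatest_int_preimage (habove : BddAbove S) (hne : ∃ m : ℤ, (m : ℝ) ∈ S) :
    ∃ v : ℤ, IsGreatest ((↑) ⁻¹' S : Set ℤ) v := by
  obtain ⟨b, hb⟩ := habove
  exact BddAbove.exists_isGreatest_of_nonempty
    ⟨⌊b⌋, fun m hm => Int.le_floor.2 (hb hm)⟩ hne

theorem Set.OrdConnected.bddAbove_of_isGreatest_int_preimage (hS : S.OrdConnected) {v : ℤ}
    (hv : IsGreatest ((↑) ⁻¹' S : Set ℤ) v) : BddAbove S := by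
  refine ⟨v + 1, fun x hx => le_of_not_gt fun hlt => ?_⟩
  have hmem : ((v + 1 : ℤ) : ℝ) ∈ S :=
    hS.out hv.1 hx ⟨by push_cast; linarith, by push_cast; linarith⟩
  exact (hv.2 hmem).not_gt (lt_add_one v)

end IntervalsOfReals

section HandoverChain

variable {ι : Type*} {S : ι → Set ℝ}

structure IsHandoverChain (S : ι → Set ℝ) {n : ℕ} (j : Fin (n + 1) → ι) (v : Fin n → ℤ) :
    Prop where
  isGreatest : ∀ i, IsGreatest ((↑) ⁻¹' S (j i.castSucc) : Set ℤ) (v i)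
  succ_mem : ∀ i, ((v i + 1 : ℤ) : ℝ) ∈ S (j i.succ)
  not_bddAbove_last : ¬BddAbove (S (j (Fin.last n)))

namespace IsHandoverChain

theorem single {i₀ : ι} (h : ¬BddAbove (S i₀)) :
    IsHandoverChain S (fun _ : Fin 1 => i₀) Fin.elim0 :=
  ⟨fun i => i.elim0, fun i => i.elim0, h⟩

theorem cons {n : ℕ} {j : Fin (n + 1) → ι} {v : Fin n → ℤ} (hc : IsHandoverChain S j v)
    {i₀ : ι} {v₀ : ℤ} (h₀ : IsGreatest ((↑) ⁻¹' S i₀ : Set ℤ) v₀)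
    (hstart : ((v₀ + 1 : ℤ) : ℝ) ∈ S (j 0)) :
    IsHandoverChain S (Fin.cons i₀ j : Fin (n + 2) → ι) (Fin.cons v₀ v) where
  isGreatest := Fin.cases (by simpa using h₀) fun i => by
    simpa [← Fin.succ_castSucc] using hc.isGreatest i
  succ_mem := Fin.cases (by simpa using hstart) fun i => by simpa using hc.succ_mem i
  not_bddAbove_last := by simpa [← Fin.succ_last] using hc.not_bddAbove_last

theorem strictMono {n : ℕ} {j : Fin (n + 1) → ι} {v : Fin n → ℤ} (hc : IsHandoverChain S j v) :
    StrictMono v := by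
  cases n with
  | zero => exact fun a => a.elim0
  | succ n =>
    refine Fin.strictMono_iff_lt_succ.2 fun i => Int.lt_iff_add_one_le.2 ?_
    have hmem := hc.succ_mem i.castSucc
    rw [Fin.succ_castSucc] at hmem
    exact (hc.isGreatest i.succ).2 hmem

theorem injective {n : ℕ} {j : Fin (n + 1) → ι} {v : Fin n → ℤ} (hc : IsHandoverChain S j v)
    (hS : ∀ i, (S i).OrdConnected) : Function.Injective j := by
  refine Function.Injective.of_lt_imp_ne fun a b hab hj => ?_
  obtain ⟨a, rfl⟩ := Fin.exists_castSucc_eq.2 (Fin.ne_last_of_lt hab)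
  rcases Fin.eq_castSucc_or_eq_last b with ⟨b, rfl⟩ | rfl
  · have hvb : v b ∈ ((↑) ⁻¹' S (j a.castSucc) : Set ℤ) := hj ▸ (hc.isGreatest b).1
    exact ((hc.isGreatest a).2 hvb).not_gt (hc.strictMono (Fin.castSucc_lt_castSucc_iff.1 hab))
  · exact hc.not_bddAbove_last (hj ▸ (hS _).bddAbove_of_isGreatest_int_preimage (hc.isGreatest a))

theorem length_lt [Finite ι] {n : ℕ} {j : Fin (n + 1) → ι} {v : Fin n → ℤ}
    (hc : IsHandoverChain S j v) (hS : ∀ i, (S i).OrdConnected) : n < Nat.card ι := by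
  simpa using Nat.card_le_card_of_injective j (hc.injective hS)

end IsHandoverChain

theorem exists_isHandoverChain [Finite ι] {t : ℤ}
    (hcover : ∀ m : ℤ, t ≤ m → ∃ i, (m : ℝ) ∈ S i) :
    ∃ (n : ℕ) (j : Fin (n + 1) → ι) (v : Fin n → ℤ),
      (t : ℝ) ∈ S (j 0) ∧ IsHandoverChain S j v := by
  obtain ⟨i₀, hi₀⟩ := hcover t le_rfl
  by_cases habove : BddAbove (S i₀)
  · obtain ⟨v₀, hv₀⟩ := exists_isGreatest_int_preimage habove ⟨t, hi₀⟩
    have htv : t ≤ v₀ := hv₀.2 hi₀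
    have hfewer : {i | ∃ m : ℤ, v₀ + 1 ≤ m ∧ (m : ℝ) ∈ S i} ⊂
        {i | ∃ m : ℤ, t ≤ m ∧ (m : ℝ) ∈ S i} := by
      refine (ssubset_iff_of_subset ?_).2 ⟨i₀, ⟨t, le_rfl, hi₀⟩, ?_⟩
      · rintro i ⟨m, hm, hmS⟩
        exact ⟨m, by omega, hmS⟩
      · rintro ⟨m, hm, hmS⟩
        have := hv₀.2 hmS
        omega
    obtain ⟨n, j, v, hstart, hc⟩ :=
      exists_isHandoverChain (t := v₀ + 1) fun m hm => hcover m (by omega)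
    exact ⟨n + 1, Fin.cons i₀ j, Fin.cons v₀ v, hi₀, hc.cons hv₀ hstart⟩
  · exact ⟨0, fun _ => i₀, Fin.elim0, hi₀, .single habove⟩
termination_by {i | ∃ m : ℤ, t ≤ m ∧ (m : ℝ) ∈ S i}.ncard
decreasing_by exact ncard_lt_ncard hfewer

theorem exists_not_bddBelow_of_forall_int_mem [Finite ι]
    (hcover : ∀ m : ℤ, ∃ i, (m : ℝ) ∈ S i) : ∃ i, ¬BddBelow (S i) := by
  by_contra! hbdd
  obtain ⟨b, hb⟩ : BddBelow (⋃ i ∈ univ, S i) :=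
    (finite_univ.bddBelow_biUnion).2 fun i _ => hbdd i
  obtain ⟨i, hi⟩ := hcover (⌊b⌋ - 1)
  have := hb (mem_biUnion (mem_univ i) hi)
  push_cast at this
  linarith [Int.floor_le b]

end HandoverChain

theorem intervals_cover_int_chain_general (s : ℕ) (S : Fin s → Set ℝ)
    (hconv : ∀ j, Convex ℝ (S j))
    (hcover : ∀ n : ℤ, ∃ j, (n : ℝ) ∈ S j) :
    (∃ j, S j = Set.univ) ∨
    ∃ n : ℕ, 1 ≤ n ∧ n < s ∧
      ∃ (j : Fin (n + 1) → Fin s) (v : Fin n → ℤ),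
        StrictMono v ∧
        ¬ BddBelow (S (j 0)) ∧
        ¬ BddAbove (S (j (Fin.last n))) ∧
        (∀ i : Fin n, (v i : ℝ) ∈ S (j i.castSucc) ∧
          ∀ m : ℤ, (m : ℝ) ∈ S (j i.castSucc) → m ≤ v i) ∧
        ∀ i : Fin n, ((v i + 1 : ℤ) : ℝ) ∈ S (j i.succ) := by
  have hS : ∀ j, (S j).OrdConnected := fun j => (hconv j).ordConnected
  by_cases huniv : ∃ j, S j = univ
  · exact .inl huniv
  obtain ⟨j₀, hbelow⟩ := exists_not_bddBelow_of_forall_int_mem hcover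
  have habove : BddAbove (S j₀) := by
    by_contra habove
    exact huniv ⟨j₀, (hS j₀).eq_univ_of_not_bddBelow_of_not_bddAbove hbelow habove⟩
  obtain ⟨v₀, hv₀⟩ :=
    exists_isGreatest_int_preimage habove ((hS j₀).exists_int_mem_of_not_bddBelow hbelow)
  obtain ⟨n, j, v, hstart, hc⟩ := exists_isHandoverChain (t := v₀ + 1) fun m _ => hcover m
  have hchain := hc.cons hv₀ hstart
  refine .inr ⟨n + 1, Nat.le_add_left 1 n, by simpa using hchain.length_lt hS, Fin.cons j₀ j,
    Fin.cons v₀ v, hchain.strictMono, by simpa using hbelow, hchain.not_bddAbove_last,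
    hchain.isGreatest, hchain.succ_mem⟩

/-- Combinatorial core of quantifier elimination for `∃ y ∈ ℝ^k ∀ z ∈ ℤ : C(y,z)`:
if a finite family `S₁, …, Sₛ` of closed convex subsets of `ℝ` (i.e. closed intervals,
possibly empty, half-lines, or all of `ℝ`) covers `ℤ`, then either some `Sⱼ = ℝ`, or
there is a chain: an interval `S_{j₁}` unbounded below with maximal integer `v₁`, then
intervals `S_{jᵢ}` containing `v_{i−1}+1` with maximal integer `vᵢ`, ending with an
interval `S_{j_{n+1}}` unbounded above containing `vₙ+1`. -/
theorem intervals_cover_int_chain (s : ℕ) (S : Fin s → Set ℝ)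
    (hconv : ∀ j, Convex ℝ (S j)) (hclosed : ∀ j, IsClosed (S j))
    (hcover : ∀ n : ℤ, ∃ j, (n : ℝ) ∈ S j) :
    (∃ j, S j = Set.univ) ∨
    ∃ n : ℕ, 1 ≤ n ∧ n < s ∧
      ∃ (j : Fin (n + 1) → Fin s) (v : Fin n → ℤ),
        StrictMono v ∧
        ¬ BddBelow (S (j 0)) ∧
        ¬ BddAbove (S (j (Fin.last n))) ∧
        (∀ i : Fin n, (v i : ℝ) ∈ S (j i.castSucc) ∧
          ∀ m : ℤ, (m : ℝ) ∈ S (j i.castSucc) → m ≤ v i) ∧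
        ∀ i : Fin n, ((v i + 1 : ℤ) : ℝ) ∈ S (j i.succ) :=
  intervals_cover_int_chain_general s S hconv hcover
end
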